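/- arXiv:2509.03384 — 6 statements merged into one kernel-verified Lean document; each statement's English description precedes it below -/
import Mathlib

section
/- Let H be a separable Hilbert space, T a bounded operator on H, and {P_n} an increasing sequence of finite rank orthogonal projections converging strongly to the identity with ‖T P_n − P_n T‖ → 0. Then for every ε > 0 there exists a compact operator K with ‖K‖ < ε such that T − K commutes with a sequence {Q_n} of mutually orthogonal finite rank projections summing strongly to the identity (i.e., T − K is block-diagonal). -/
/-!
Pass to a subsequence with `‖[T, P (φ k)]‖ < ε / 2 ^ (k + 3)` and cut `H` into the finite rank
blocks `Q k = P (φ k) - P (φ (k - 1))` (with `P (φ (-1)) = 0`). For `K` take the part of `T` off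
the block diagonal, `K = ∑ₖ ((1 - P (φ k)) T Q k + Q k T (1 - P (φ k)))`; as
`1 - P (φ k) = ∑_{j > k} Q j`, this is `∑_{j ≠ k} Q j T Q k`, so `T - K = ∑ₖ Q k T Q k` commutes
with every `Q k`. Since `Q k ≤ P (φ k)`, the `k`-th term of `K` equals
`(1 - P (φ k)) [T, P (φ k)] Q k - Q k [T, P (φ k)] (1 - P (φ k))`: it has finite rank and norm at
most `2 ‖[T, P (φ k)]‖`, so the series converges in norm to a compact `K` with `‖K‖ ≤ ε / 2`.
-/

open Filter Topology Finset MulOpposite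

section Ring

variable {R : Type*} [Ring R]

def IsIdempotentChain (S : ℕ → R) : Prop :=
  ∀ ⦃a b : ℕ⦄, a ≤ b → S a * S b = S a ∧ S b * S a = S a

def chainBlock (S : ℕ → R) (k : ℕ) : R := S (k + 1) - S k

def offDiagTerm (S : ℕ → R) (t : R) (k : ℕ) : R :=
  (1 - S (k + 1)) * t * chainBlock S k + chainBlock S k * t * (1 - S (k + 1))

def prependZero {M : Type*} [Zero M] (S : ℕ → M) : ℕ → M
  | 0 => 0
  | k + 1 => S k

theorem sum_range_chainBlock {S : ℕ → R} (hS0 : S 0 = 0) (n : ℕ) :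
    ∑ k ∈ range n, chainBlock S k = S n := by
  simp only [chainBlock, sum_range_sub, hS0, sub_zero]

theorem mul_chainBlock (S : ℕ → R) (x : R) (k : ℕ) :
    x * chainBlock S k = x * S (k + 1) - x * S k :=
  mul_sub _ _ _

theorem chainBlock_op (S : ℕ → R) (k : ℕ) :
    chainBlock (op ∘ S) k = op (chainBlock S k) := by
  simp [chainBlock]

theorem offDiagTerm_op (S : ℕ → R) (t : R) (k : ℕ) :
    offDiagTerm (op ∘ S) (MulOpposite.op t) k = op (offDiagTerm S t k) := by
  simp [offDiagTerm, chainBlock_op, add_comm, mul_assoc]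

namespace IsIdempotentChain

variable {S : ℕ → R}

theorem mul_of_le (hS : IsIdempotentChain S) {a b : ℕ} (h : a ≤ b) : S a * S b = S a :=
  (hS h).1

theorem mul_of_le' (hS : IsIdempotentChain S) {a b : ℕ} (h : a ≤ b) : S b * S a = S a :=
  (hS h).2

theorem comp (hS : IsIdempotentChain S) {φ : ℕ → ℕ} (hφ : Monotone φ) :
    IsIdempotentChain (S ∘ φ) :=
  fun _ _ h => hS (hφ h)

theorem prependZero (hS : IsIdempotentChain S) : IsIdempotentChain (prependZero S) := by
  rintro (_ | a) (_ | b) h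
  · simp [_root_.prependZero]
  · simp [_root_.prependZero]
  · omega
  · exact hS (by omega)

theorem op (hS : IsIdempotentChain S) : IsIdempotentChain (op ∘ S) :=
  fun _ _ h => ⟨congrArg MulOpposite.op (hS h).2, congrArg MulOpposite.op (hS h).1⟩

theorem mul_chainBlock_of_lt (hS : IsIdempotentChain S) {m b : ℕ} (h : m < b) :
    S b * chainBlock S m = chainBlock S m := by
  rw [chainBlock, mul_sub, hS.mul_of_le' h, hS.mul_of_le' h.le]

theorem chainBlock_mul_of_lt (hS : IsIdempotentChain S) {m b : ℕ} (h : m < b) :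
    chainBlock S m * S b = chainBlock S m := by
  rw [chainBlock, sub_mul, hS.mul_of_le h, hS.mul_of_le h.le]

theorem mul_chainBlock_of_le (hS : IsIdempotentChain S) {a m : ℕ} (h : a ≤ m) :
    S a * chainBlock S m = 0 := by
  rw [chainBlock, mul_sub, hS.mul_of_le (h.trans m.le_succ), hS.mul_of_le h, sub_self]

theorem chainBlock_mul_of_le (hS : IsIdempotentChain S) {a m : ℕ} (h : a ≤ m) :
    chainBlock S m * S a = 0 := by
  rw [chainBlock, sub_mul, hS.mul_of_le' (h.trans m.le_succ), hS.mul_of_le' h, sub_self]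

theorem isIdempotentElem_chainBlock (hS : IsIdempotentChain S) (k : ℕ) :
    IsIdempotentElem (chainBlock S k) := by
  rw [IsIdempotentElem, mul_chainBlock, hS.chainBlock_mul_of_lt k.lt_succ_self,
    hS.chainBlock_mul_of_le le_rfl, sub_zero]

theorem chainBlock_mul_chainBlock_of_ne (hS : IsIdempotentChain S) {m n : ℕ} (h : m ≠ n) :
    chainBlock S m * chainBlock S n = 0 := by
  rcases h.lt_or_gt with h | h
  · rw [mul_chainBlock, hS.chainBlock_mul_of_lt h, hS.chainBlock_mul_of_lt (h.trans n.lt_succ_self),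
      sub_self]
  · rw [mul_chainBlock, hS.chainBlock_mul_of_le h, hS.chainBlock_mul_of_le h.le, sub_self]

theorem one_sub_mul_chainBlock_of_lt (hS : IsIdempotentChain S) {m b : ℕ} (h : m < b) :
    (1 - S b) * chainBlock S m = 0 := by
  rw [sub_mul, one_mul, hS.mul_chainBlock_of_lt h, sub_self]

theorem one_sub_mul_chainBlock_of_le (hS : IsIdempotentChain S) {a m : ℕ} (h : a ≤ m) :
    (1 - S a) * chainBlock S m = chainBlock S m := by
  rw [sub_mul, one_mul, hS.mul_chainBlock_of_le h, sub_zero]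

theorem offDiagTerm_mul_chainBlock_of_lt (hS : IsIdempotentChain S) (t : R) {m k : ℕ}
    (h : m < k) : offDiagTerm S t k * chainBlock S m = 0 := by
  simp only [offDiagTerm, add_mul, mul_assoc, hS.chainBlock_mul_chainBlock_of_ne h.ne',
    hS.one_sub_mul_chainBlock_of_lt (h.trans k.lt_succ_self), mul_zero, add_zero]

theorem chainBlock_mul_offDiagTerm_of_lt (hS : IsIdempotentChain S) (t : R) {m k : ℕ}
    (h : m < k) : chainBlock S m * offDiagTerm S t k = 0 := by
  apply op_injective
  simpa [← chainBlock_op, ← offDiagTerm_op] using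
    hS.op.offDiagTerm_mul_chainBlock_of_lt (MulOpposite.op t) h

theorem sub_sum_offDiagTerm_mul_chainBlock (hS : IsIdempotentChain S) (hS0 : S 0 = 0) (t : R)
    (m : ℕ) : (t - ∑ k ∈ range (m + 1), offDiagTerm S t k) * chainBlock S m =
      chainBlock S m * t * chainBlock S m := by
  have below : ∀ k ∈ range m, offDiagTerm S t k * chainBlock S m =
      chainBlock S k * t * chainBlock S m := by
    intro k hk
    simp only [offDiagTerm, add_mul, mul_assoc, mul_zero, zero_add,
      hS.chainBlock_mul_chainBlock_of_ne (mem_range.1 hk).ne,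
      hS.one_sub_mul_chainBlock_of_le (mem_range.1 hk)]
  have diag : offDiagTerm S t m * chainBlock S m = (1 - S (m + 1)) * t * chainBlock S m := by
    simp only [offDiagTerm, add_mul, mul_assoc, hS.one_sub_mul_chainBlock_of_lt m.lt_succ_self,
      (hS.isIdempotentElem_chainBlock m).eq, mul_zero, add_zero]
  rw [sub_mul, sum_mul, sum_range_succ, sum_congr rfl below, diag, ← sum_mul, ← sum_mul,
    sum_range_chainBlock hS0, chainBlock]
  noncomm_ring

theorem chainBlock_mul_sub_sum_offDiagTerm (hS : IsIdempotentChain S) (hS0 : S 0 = 0) (t : R)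
    (m : ℕ) : chainBlock S m * (t - ∑ k ∈ range (m + 1), offDiagTerm S t k) =
      chainBlock S m * t * chainBlock S m := by
  apply op_injective
  simpa [← chainBlock_op, ← offDiagTerm_op, mul_assoc] using
    hS.op.sub_sum_offDiagTerm_mul_chainBlock (by simp [hS0]) (MulOpposite.op t) m

end IsIdempotentChain

end Ring

section StarRing

theorem IsStarProjection.sum {R ι : Type*} [NonUnitalNonAssocSemiring R] [StarRing R]
    {p : ι → R} (hp : ∀ i, IsStarProjection (p i)) (horth : Pairwise fun i j => p i * p j = 0)
    (s : Finset ι) : IsStarProjection (∑ i ∈ s, p i) := by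
  classical
  induction s using Finset.induction_on with
  | empty => simp
  | insert i s hi ih =>
    rw [sum_insert hi]
    refine (hp i).add ih ?_
    rw [mul_sum]
    exact sum_eq_zero fun j hj => horth fun h => hi (h ▸ hj)

variable {R : Type*} [Ring R] [StarRing R] {S : ℕ → R}

theorem isStarProjection_prependZero (hSP : ∀ k, IsStarProjection (S k)) :
    ∀ k, IsStarProjection (prependZero S k)
  | 0 => .zero R
  | k + 1 => hSP k

theorem IsIdempotentChain.isStarProjection_chainBlock (hS : IsIdempotentChain S)
    (hSP : ∀ k, IsStarProjection (S k)) (k : ℕ) : IsStarProjection (chainBlock S k) :=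
  (hSP k).sub_of_mul_eq_left (hSP (k + 1)) (hS.mul_of_le k.le_succ)

end StarRing

theorem IsStarProjection.norm_offDiag_le {R : Type*} [NormedRing R] [StarRing R] [CStarRing R]
    {s q : R} (hs : IsStarProjection s) (hq : IsStarProjection q) (hsq : s * q = q) (t : R) :
    ‖(1 - s) * t * q + q * t * (1 - s)‖ ≤ 2 * ‖t * s - s * t‖ := by
  have hqs : q * s = q := by
    simpa [hs.isSelfAdjoint.star_eq, hq.isSelfAdjoint.star_eq] using congr(star $hsq)
  have left : (1 - s) * t * q = (1 - s) * (t * s - s * t) * q :=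
    calc (1 - s) * t * q = (1 - s) * t * (s * q) - (1 - s) * s * (t * q) := by
          rw [hsq, hs.one_sub_mul_self, zero_mul, sub_zero]
      _ = _ := by noncomm_ring
  have right : q * t * (1 - s) = -(q * (t * s - s * t) * (1 - s)) :=
    calc q * t * (1 - s) = q * s * (t * (1 - s)) - q * t * (s * (1 - s)) := by
          rw [hqs, hs.mul_one_sub_self, mul_zero, sub_zero, mul_assoc]
      _ = _ := by noncomm_ring
  have bound : ∀ x z : R, ‖x‖ ≤ 1 → ‖z‖ ≤ 1 → ‖x * (t * s - s * t) * z‖ ≤ ‖t * s - s * t‖ := by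
    intro x z hx hz
    calc ‖x * (t * s - s * t) * z‖ ≤ ‖x‖ * ‖t * s - s * t‖ * ‖z‖ := norm_mul₃_le
      _ ≤ 1 * ‖t * s - s * t‖ * 1 := by gcongr
      _ = ‖t * s - s * t‖ := by ring
  have h1s := hs.one_sub.norm_le
  calc ‖(1 - s) * t * q + q * t * (1 - s)‖
      ≤ ‖(1 - s) * t * q‖ + ‖q * t * (1 - s)‖ := norm_add_le _ _
    _ ≤ ‖t * s - s * t‖ + ‖t * s - s * t‖ := by
        rw [left, right, norm_neg]
        exact add_le_add (bound _ _ h1s hq.norm_le) (bound _ _ hq.norm_le h1s)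
    _ = 2 * ‖t * s - s * t‖ := by ring

theorem IsIdempotentChain.norm_offDiagTerm_le {R : Type*} [NormedRing R] [StarRing R]
    [CStarRing R] {S : ℕ → R} (hS : IsIdempotentChain S) (hSP : ∀ k, IsStarProjection (S k))
    (t : R) (k : ℕ) : ‖offDiagTerm S t k‖ ≤ 2 * ‖t * S (k + 1) - S (k + 1) * t‖ :=
  (hSP (k + 1)).norm_offDiag_le (hS.isStarProjection_chainBlock hSP k)
    (hS.mul_chainBlock_of_lt k.lt_succ_self) t

theorem IsIdempotentChain.commute_sub_tsum_offDiagTerm {R : Type*} [Ring R]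
    [TopologicalSpace R] [IsTopologicalRing R] [T2Space R] {S : ℕ → R}
    (hS : IsIdempotentChain S) (hS0 : S 0 = 0) {t : R} (hsum : Summable (offDiagTerm S t))
    (m : ℕ) : Commute (t - ∑' k, offDiagTerm S t k) (chainBlock S m) := by
  have hvanish : ∀ k ∉ range (m + 1), m < k := fun k hk => not_lt.1 (mt mem_range.2 hk)
  have hright : (∑' k, offDiagTerm S t k) * chainBlock S m =
      (∑ k ∈ range (m + 1), offDiagTerm S t k) * chainBlock S m := by
    rw [← hsum.tsum_mul_right, sum_mul,
      tsum_eq_sum fun k hk => hS.offDiagTerm_mul_chainBlock_of_lt t (hvanish k hk)]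
  have hleft : chainBlock S m * ∑' k, offDiagTerm S t k =
      chainBlock S m * ∑ k ∈ range (m + 1), offDiagTerm S t k := by
    rw [← hsum.tsum_mul_left, mul_sum,
      tsum_eq_sum fun k hk => hS.chainBlock_mul_offDiagTerm_of_lt t (hvanish k hk)]
  rw [Commute, SemiconjBy, sub_mul, hright, ← sub_mul, hS.sub_sum_offDiagTerm_mul_chainBlock hS0,
    mul_sub, hleft, ← mul_sub, hS.chainBlock_mul_sub_sum_offDiagTerm hS0]

section Operators

variable {𝕜 E F : Type*} [NontriviallyNormedField 𝕜] [NormedAddCommGroup E] [NormedSpace 𝕜 E]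
  [NormedAddCommGroup F] [NormedSpace 𝕜 F]

theorem ContinuousLinearMap.isCompactOperator_of_finiteDimensional_range [ProperSpace 𝕜]
    (f : E →L[𝕜] F) [FiniteDimensional 𝕜 (LinearMap.range (f : E →ₗ[𝕜] F))] :
    IsCompactOperator f :=
  haveI := FiniteDimensional.proper 𝕜 (LinearMap.range (f : E →ₗ[𝕜] F))
  (isCompactOperator_of_locallyCompactSpace_dom
    (f.codRestrict _ (LinearMap.mem_range_self (f : E →ₗ[𝕜] F)))).clm_comp (Submodule.subtypeL _)

theorem isCompactOperator_tsum [CompleteSpace F] {ι : Type*} {A : ι → E →L[𝕜] F}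
    (hA : ∀ i, IsCompactOperator (A i)) (hsum : Summable A) : IsCompactOperator ⇑(∑' i, A i) :=
  isCompactOperator_of_tendsto hsum.hasSum
    (Eventually.of_forall fun _ => Submodule.sum_mem (compactOperator _ E F) fun i _ => hA i)

theorem ContinuousLinearMap.finiteDimensional_range_of_mul_eq {p q : E →L[𝕜] E} (h : p * q = q)
    [FiniteDimensional 𝕜 (LinearMap.range (p : E →ₗ[𝕜] E))] :
    FiniteDimensional 𝕜 (LinearMap.range (q : E →ₗ[𝕜] E)) := by
  rw [← h]
  exact Submodule.finiteDimensional_of_le (LinearMap.range_comp_le_range _ _)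

theorem isCompactOperator_offDiagTerm {S : ℕ → E →L[𝕜] E} (t : E →L[𝕜] E) {k : ℕ}
    (hQ : IsCompactOperator ⇑(chainBlock S k)) : IsCompactOperator ⇑(offDiagTerm S t k) := by
  rw [offDiagTerm, mul_assoc (chainBlock S k)]
  exact (hQ.clm_comp ((1 - S (k + 1)) * t)).add (hQ.comp_clm (t * (1 - S (k + 1))))

end Operators

section Hilbert

variable {𝕜 E : Type*} [RCLike 𝕜] [NormedAddCommGroup E] [InnerProductSpace 𝕜 E] [CompleteSpace E]

theorem isIdempotentChain_of_monotone_range {P : ℕ → E →L[𝕜] E}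
    (hP : ∀ n, IsStarProjection (P n))
    (hmono : Monotone fun n => LinearMap.range (P n : E →ₗ[𝕜] E)) : IsIdempotentChain P := by
  intro a b h
  have hb : IsIdempotentElem (P b : E →ₗ[𝕜] E) :=
    ContinuousLinearMap.isIdempotentElem_toLinearMap_iff.2 (hP b).isIdempotentElem
  have hba : P b * P a = P a := ContinuousLinearMap.coe_injective <|
    (LinearMap.IsIdempotentElem.comp_eq_right_iff hb _).2 (hmono h)
  refine ⟨?_, hba⟩
  simpa [(hP a).isSelfAdjoint.star_eq, (hP b).isSelfAdjoint.star_eq] using congr(star $hba)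

theorem IsIdempotentChain.hasSum_chainBlock_apply {S : ℕ → E →L[𝕜] E} (hS : IsIdempotentChain S)
    (hSP : ∀ k, IsStarProjection (S k)) (hS0 : S 0 = 0) {x : E}
    (hx : Tendsto (fun n => S n x) atTop (𝓝 x)) : HasSum (fun k => chainBlock S k x) x := by
  have hpartial : Tendsto (fun n => ∑ k ∈ range n, chainBlock S k x) atTop (𝓝 x) := by
    simpa [← _root_.sum_apply, sum_range_chainBlock hS0] using hx
  refine (Summable.hasSum_iff_tendsto_nat ?_).2 hpartial
  rw [summable_iff_vanishing_norm]
  intro δ hδ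
  obtain ⟨N, hN⟩ := Metric.tendsto_atTop.1 hx δ hδ
  refine ⟨range N, fun s hs => ?_⟩
  have hproj : IsStarProjection (∑ k ∈ s, chainBlock S k) :=
    IsStarProjection.sum (hS.isStarProjection_chainBlock hSP)
      (fun _ _ => hS.chainBlock_mul_chainBlock_of_ne) s
  have hkill : (∑ k ∈ s, chainBlock S k) (S N x) = 0 := by
    rw [← mul_apply_eq_comp, sum_mul, sum_eq_zero fun k hk => hS.chainBlock_mul_of_le
      (not_lt.1 fun h => disjoint_left.1 hs hk (mem_range.2 h)), zero_apply]
  calc ‖∑ k ∈ s, chainBlock S k x‖ = ‖(∑ k ∈ s, chainBlock S k) (x - S N x)‖ := by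
        rw [map_sub, hkill, sub_zero, _root_.sum_apply]
    _ ≤ 1 * ‖x - S N x‖ := (∑ k ∈ s, chainBlock S k).le_of_opNorm_le (hproj.norm_le _) _
    _ < δ := by simpa [dist_eq_norm, norm_sub_rev] using hN N le_rfl

end Hilbert

theorem stmt_0_general
    {H : Type*} [NormedAddCommGroup H] [InnerProductSpace ℂ H] [CompleteSpace H]
    (T : H →L[ℂ] H)
    (P : ℕ → H →L[ℂ] H)
    (hproj : ∀ n, IsIdempotentElem (P n))
    (hsa : ∀ n, IsSelfAdjoint (P n))
    (hfin : ∀ n, FiniteDimensional ℂ (LinearMap.range (P n : H →ₗ[ℂ] H)))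
    (hmono : ∀ n, LinearMap.range (P n : H →ₗ[ℂ] H) ≤ LinearMap.range (P (n + 1) : H →ₗ[ℂ] H))
    (hstrong : ∀ x : H, Filter.Tendsto (fun n => P n x) Filter.atTop (nhds x))
    (hqd : Filter.Tendsto (fun n => ‖T * P n - P n * T‖) Filter.atTop (nhds 0))
    {ε : ℝ} (hε : 0 < ε) :
    ∃ K : H →L[ℂ] H, IsCompactOperator K ∧ ‖K‖ < ε ∧
      ∃ Q : ℕ → H →L[ℂ] H,
        (∀ n, IsIdempotentElem (Q n)) ∧
        (∀ n, IsSelfAdjoint (Q n)) ∧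
        (∀ n, FiniteDimensional ℂ (LinearMap.range (Q n : H →ₗ[ℂ] H))) ∧
        (∀ m n, m ≠ n → Q m * Q n = 0) ∧
        (∀ x : H, HasSum (fun n => Q n x) x) ∧
        (∀ n, (T - K) * Q n = Q n * (T - K)) := by
  obtain ⟨φ, hφ, hφT⟩ := extraction_forall_of_eventually fun k =>
    hqd.eventually_lt_const (by positivity : (0 : ℝ) < ε / 2 / 2 / 2 / 2 ^ k)
  have hP (n : ℕ) : IsStarProjection (P n) := ⟨hproj n, hsa n⟩
  set S := prependZero (P ∘ φ)
  have hS : IsIdempotentChain S :=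
    ((isIdempotentChain_of_monotone_range hP (monotone_nat_of_le_succ hmono)).comp
      hφ.monotone).prependZero
  have hSP : ∀ k, IsStarProjection (S k) := isStarProjection_prependZero fun k => hP (φ k)
  have hQ := hS.isStarProjection_chainBlock hSP
  have hQfin (k : ℕ) :
      FiniteDimensional ℂ (LinearMap.range ((chainBlock S k : H →L[ℂ] H) : H →ₗ[ℂ] H)) :=
    haveI : FiniteDimensional ℂ (LinearMap.range (S (k + 1) : H →ₗ[ℂ] H)) := hfin (φ k)
    ContinuousLinearMap.finiteDimensional_range_of_mul_eq (hS.mul_chainBlock_of_lt k.lt_succ_self)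
  have hA (k : ℕ) : ‖offDiagTerm S T k‖ ≤ ε / 2 / 2 / 2 ^ k := by
    calc ‖offDiagTerm S T k‖ ≤ 2 * ‖T * S (k + 1) - S (k + 1) * T‖ :=
          hS.norm_offDiagTerm_le hSP T k
      _ ≤ 2 * (ε / 2 / 2 / 2 / 2 ^ k) := by gcongr; exact (hφT k).le
      _ = ε / 2 / 2 / 2 ^ k := by ring
  have hAsum : Summable (offDiagTerm S T) :=
    .of_norm_bounded (hasSum_geometric_two' (ε / 2)).summable hA
  refine ⟨∑' k, offDiagTerm S T k,
    isCompactOperator_tsum (fun k => haveI := hQfin k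
      isCompactOperator_offDiagTerm T (chainBlock S k).isCompactOperator_of_finiteDimensional_range)
      hAsum,
    (tsum_of_norm_bounded (hasSum_geometric_two' _) hA).trans_lt (half_lt_self hε),
    chainBlock S, fun k => (hQ k).isIdempotentElem, fun k => (hQ k).isSelfAdjoint, hQfin,
    fun _ _ => hS.chainBlock_mul_chainBlock_of_ne,
    fun x => hS.hasSum_chainBlock_apply hSP rfl
      ((tendsto_add_atTop_iff_nat 1).1 ((hstrong x).comp hφ.tendsto_atTop)),
    fun m => (hS.commute_sub_tsum_offDiagTerm rfl hAsum m).eq⟩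

/-- Halmos' theorem. Every bounded quasidiagonal operator is a
compact perturbation (of arbitrarily small norm) of a block-diagonal operator. -/
theorem stmt_0
    {H : Type*} [NormedAddCommGroup H] [InnerProductSpace ℂ H] [CompleteSpace H]
    [TopologicalSpace.SeparableSpace H]
    (T : H →L[ℂ] H)
    (P : ℕ → H →L[ℂ] H)
    (hproj : ∀ n, IsIdempotentElem (P n))
    (hsa : ∀ n, IsSelfAdjoint (P n))
    (hfin : ∀ n, FiniteDimensional ℂ (LinearMap.range (P n : H →ₗ[ℂ] H)))
    (hmono : ∀ n, LinearMap.range (P n : H →ₗ[ℂ] H) ≤ LinearMap.range (P (n + 1) : H →ₗ[ℂ] H))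
    (hstrong : ∀ x : H, Filter.Tendsto (fun n => P n x) Filter.atTop (nhds x))
    (hqd : Filter.Tendsto (fun n => ‖T * P n - P n * T‖) Filter.atTop (nhds 0))
    {ε : ℝ} (hε : 0 < ε) :
    ∃ K : H →L[ℂ] H, IsCompactOperator K ∧ ‖K‖ < ε ∧
      ∃ Q : ℕ → H →L[ℂ] H,
        (∀ n, IsIdempotentElem (Q n)) ∧
        (∀ n, IsSelfAdjoint (Q n)) ∧
        (∀ n, FiniteDimensional ℂ (LinearMap.range (Q n : H →ₗ[ℂ] H))) ∧
        (∀ m n, m ≠ n → Q m * Q n = 0) ∧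
        (∀ x : H, HasSum (fun n => Q n x) x) ∧
        (∀ n, (T - K) * Q n = Q n * (T - K)) :=
  stmt_0_general T P hproj hsa hfin hmono hstrong hqd hε
end

section
/- Let K be a compact operator on a separable Hilbert space H with orthonormal basis {e_n}, and let {R_n} be any sequence of finite rank orthogonal projections onto span{e_{k_1},…,e_{k_n}} for a strictly increasing sequence {k_n} ⊆ ℕ. Then ‖[K, R_n]‖₂ / ‖R_n‖₂ → 0 as n → ∞, where ‖·‖₂ is the Hilbert–Schmidt norm. -/
/-!
Let `P` be the coordinate projection onto `span {e j | j ∈ T}`. The commutator `[K, P]` sends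
`e j` to `(1 - P) (K (e j))` for `j ∈ T` and to `-P (K (e j))` otherwise, so Bessel's inequality
bounds `‖[K, P]‖₂²` by `∑ j ∈ T, (‖K (e j)‖² + ‖K† (e j)‖²)`. The orthonormal sequence
`e (k i)` tends weakly to `0`, and a compact operator maps it, as well as the bounded weakly null
sequence `K† (e (k i))`, to a norm-null sequence; since `‖K† v‖² ≤ ‖K (K† v)‖` for unit `v`, both
`K (e (k i))` and `K† (e (k i))` tend to `0`. With `T = {k 0, …, k (n - 1)}` the bound is therefore
`o(n)` by Cesàro.
-/

open Filter

/-- The Hilbert–Schmidt norm of (the restriction to basis vectors of) an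
operator `A`, computed with respect to the orthonormal basis `e`. -/
noncomputable def hsNormOn {H : Type*} [NormedAddCommGroup H] [InnerProductSpace ℂ H]
    (e : HilbertBasis ℕ ℂ H) (A : H → H) : ℝ :=
  Real.sqrt (∑' j, ‖A (e j)‖ ^ 2)

open Topology Finset
open scoped InnerProductSpace InnerProduct

section

variable {𝕜 E F : Type*} [RCLike 𝕜]

section Orthonormal

variable [NormedAddCommGroup E] [InnerProductSpace 𝕜 E]

theorem Orthonormal.tendsto_inner_zero {v : ℕ → E} (hv : Orthonormal 𝕜 v) (x : E) :
    Tendsto (fun i => ⟪x, v i⟫_𝕜) atTop (𝓝 0) := by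
  rw [tendsto_zero_iff_norm_tendsto_zero]
  simpa [norm_inner_symm x, Real.sqrt_sq (norm_nonneg _)] using
    (hv.inner_products_summable x).tendsto_atTop_zero.sqrt

variable {ι : Type*} {v : ι → E}

theorem Orthonormal.norm_sum_inner_smul_sq (hv : Orthonormal 𝕜 v) (s : Finset ι) (x : E) :
    ‖∑ i ∈ s, ⟪v i, x⟫_𝕜 • v i‖ ^ 2 = ∑ i ∈ s, ‖⟪v i, x⟫_𝕜‖ ^ 2 := by
  rw [@norm_sq_eq_re_inner 𝕜, hv.inner_sum, map_sum]
  refine sum_congr rfl fun i _ => ?_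
  rw [RCLike.conj_mul, ← RCLike.ofReal_pow, RCLike.ofReal_re]

theorem Orthonormal.norm_sub_sum_inner_smul_le (hv : Orthonormal 𝕜 v) (s : Finset ι) (x : E) :
    ‖x - ∑ i ∈ s, ⟪v i, x⟫_𝕜 • v i‖ ≤ ‖x‖ := by
  have hcross : RCLike.re ⟪x, ∑ i ∈ s, ⟪v i, x⟫_𝕜 • v i⟫_𝕜 = ∑ i ∈ s, ‖⟪v i, x⟫_𝕜‖ ^ 2 := by
    simp only [inner_sum, inner_smul_right, map_sum]
    refine sum_congr rfl fun i _ => ?_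
    rw [← inner_conj_symm x, RCLike.mul_conj, ← RCLike.ofReal_pow, RCLike.ofReal_re]
  have hpyth : ‖x - ∑ i ∈ s, ⟪v i, x⟫_𝕜 • v i‖ ^ 2 = ‖x‖ ^ 2 - ∑ i ∈ s, ‖⟪v i, x⟫_𝕜‖ ^ 2 := by
    rw [@norm_sub_sq 𝕜, hcross, hv.norm_sum_inner_smul_sq]
    ring
  refine le_of_pow_le_pow_left₀ two_ne_zero (norm_nonneg x) ?_
  rw [hpyth]
  linarith [sum_nonneg fun i (_ : i ∈ s) => sq_nonneg ‖⟪v i, x⟫_𝕜‖]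

end Orthonormal

section Compact

variable [NormedAddCommGroup E] [InnerProductSpace 𝕜 E]
  [NormedAddCommGroup F] [InnerProductSpace 𝕜 F]

theorem IsCompact.tendsto_zero_of_tendsto_inner {M : Set F} (hM : IsCompact M) {u : ℕ → F}
    (hu : ∀ n, u n ∈ M) (hw : ∀ y, Tendsto (fun n => ⟪y, u n⟫_𝕜) atTop (𝓝 0)) :
    Tendsto u atTop (𝓝 0) := by
  refine tendsto_of_subseq_tendsto fun ns hns => ?_
  obtain ⟨a, -, φ, hφ, hconv⟩ := hM.tendsto_subseq fun n => hu (ns n)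
  have ha : a = 0 := ext_inner_left 𝕜 fun y => by
    rw [inner_zero_right]
    exact tendsto_nhds_unique (tendsto_const_nhds.inner hconv)
      ((hw y).comp (hns.comp hφ.tendsto_atTop))
  exact ⟨φ, ha ▸ hconv⟩

variable [CompleteSpace E] [CompleteSpace F]

theorem IsCompactOperator.tendsto_zero_of_tendsto_inner {K : E →L[𝕜] F} (hK : IsCompactOperator K)
    {x : ℕ → E} {C : ℝ} (hb : ∀ n, ‖x n‖ ≤ C)
    (hw : ∀ y, Tendsto (fun n => ⟪y, x n⟫_𝕜) atTop (𝓝 0)) :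
    Tendsto (fun n => K (x n)) atTop (𝓝 0) := by
  obtain ⟨M, hMc, hMs⟩ := (hK : IsCompactOperator (K : E →ₗ[𝕜] F)).image_closedBall_subset_compact C
  refine hMc.tendsto_zero_of_tendsto_inner (𝕜 := 𝕜)
    (fun n => hMs ⟨x n, mem_closedBall_zero_iff.2 (hb n), rfl⟩) fun y => ?_
  simpa only [← ContinuousLinearMap.adjoint_inner_left] using hw ((K†) y)

theorem IsCompactOperator.tendsto_apply_orthonormal {K : E →L[𝕜] F} (hK : IsCompactOperator K)
    {v : ℕ → E} (hv : Orthonormal 𝕜 v) : Tendsto (fun i => K (v i)) atTop (𝓝 0) :=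
  hK.tendsto_zero_of_tendsto_inner (fun i => (hv.1 i).le) hv.tendsto_inner_zero

theorem IsCompactOperator.tendsto_adjoint_apply_orthonormal {K : E →L[𝕜] F}
    (hK : IsCompactOperator K) {v : ℕ → F} (hv : Orthonormal 𝕜 v) :
    Tendsto (fun i => (K†) (v i)) atTop (𝓝 0) := by
  have hKK : Tendsto (fun i => K ((K†) (v i))) atTop (𝓝 0) := by
    refine hK.tendsto_zero_of_tendsto_inner (C := ‖K†‖) (fun i => ?_) fun y => ?_
    · simpa [hv.1 i] using (K†).le_opNorm (v i)
    · simpa only [ContinuousLinearMap.adjoint_inner_right] using hv.tendsto_inner_zero (K y)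
  have hsq : ∀ i, ‖(K†) (v i)‖ ≤ √‖K ((K†) (v i))‖ := fun i => by
    refine Real.le_sqrt_of_sq_le ?_
    calc ‖(K†) (v i)‖ ^ 2 = RCLike.re ⟪v i, K ((K†) (v i))⟫_𝕜 := by
          rw [@norm_sq_eq_re_inner 𝕜, ContinuousLinearMap.adjoint_inner_left]
      _ ≤ ‖⟪v i, K ((K†) (v i))⟫_𝕜‖ := RCLike.re_le_norm _
      _ ≤ ‖K ((K†) (v i))‖ := by simpa [hv.1 i] using norm_inner_le_norm (𝕜 := 𝕜) (v i) _
  rw [tendsto_zero_iff_norm_tendsto_zero]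
  refine squeeze_zero (fun _ => norm_nonneg _) hsq ?_
  simpa using hKK.norm.sqrt

end Compact

section CoordProj

variable [NormedAddCommGroup E] [InnerProductSpace 𝕜 E] {ι : Type*}

noncomputable def HilbertBasis.coordProj (e : HilbertBasis ι 𝕜 E) (T : Finset ι) (x : E) : E :=
  ∑ j ∈ T, ⟪e j, x⟫_𝕜 • e j

namespace HilbertBasis

variable (e : HilbertBasis ι 𝕜 E) (T : Finset ι) {j : ι}

theorem coordProj_apply_of_mem (hj : j ∈ T) : e.coordProj T (e j) = e j := by
  classical
  simp [coordProj, orthonormal_iff_ite.mp e.orthonormal, ite_smul, hj]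

theorem coordProj_apply_of_notMem (hj : j ∉ T) : e.coordProj T (e j) = 0 := by
  classical
  simp [coordProj, orthonormal_iff_ite.mp e.orthonormal, ite_smul, hj]

variable (K : E →L[𝕜] E)

theorem norm_commutator_coordProj_apply_le_of_mem (hj : j ∈ T) :
    ‖K (e.coordProj T (e j)) - e.coordProj T (K (e j))‖ ≤ ‖K (e j)‖ := by
  rw [e.coordProj_apply_of_mem T hj]
  exact e.orthonormal.norm_sub_sum_inner_smul_le T _

theorem norm_commutator_coordProj_apply_sq_of_notMem (hj : j ∉ T) :
    ‖K (e.coordProj T (e j)) - e.coordProj T (K (e j))‖ ^ 2 = ∑ i ∈ T, ‖⟪e i, K (e j)⟫_𝕜‖ ^ 2 := by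
  rw [e.coordProj_apply_of_notMem T hj, map_zero, zero_sub, norm_neg, coordProj,
    e.orthonormal.norm_sum_inner_smul_sq]

variable [CompleteSpace E]

theorem sum_norm_commutator_coordProj_apply_sq_le (s : Finset ι) :
    ∑ j ∈ s, ‖K (e.coordProj T (e j)) - e.coordProj T (K (e j))‖ ^ 2 ≤
      ∑ i ∈ T, (‖K (e i)‖ ^ 2 + ‖(K†) (e i)‖ ^ 2) := by
  classical
  rw [← sum_filter_add_sum_filter_not s (· ∈ T), sum_add_distrib]
  gcongr
  · calc _ ≤ ∑ j ∈ s with j ∈ T, ‖K (e j)‖ ^ 2 := sum_le_sum fun j hj => by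
          gcongr; exact e.norm_commutator_coordProj_apply_le_of_mem T K (mem_filter.1 hj).2
      _ ≤ _ := sum_le_sum_of_subset_of_nonneg (fun j hj => (mem_filter.1 hj).2)
          fun _ _ _ => sq_nonneg _
  · calc _ = ∑ j ∈ s with j ∉ T, ∑ i ∈ T, ‖⟪e j, (K†) (e i)⟫_𝕜‖ ^ 2 := sum_congr rfl fun j hj => by
          rw [e.norm_commutator_coordProj_apply_sq_of_notMem T K (mem_filter.1 hj).2]
          refine sum_congr rfl fun i _ => ?_
          rw [← ContinuousLinearMap.adjoint_inner_left, norm_inner_symm]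
      _ = ∑ i ∈ T, ∑ j ∈ s with j ∉ T, ‖⟪e j, (K†) (e i)⟫_𝕜‖ ^ 2 := sum_comm
      _ ≤ _ := sum_le_sum fun i _ => e.orthonormal.sum_inner_products_le _

theorem tsum_norm_commutator_coordProj_apply_sq_le :
    ∑' j, ‖K (e.coordProj T (e j)) - e.coordProj T (K (e j))‖ ^ 2 ≤
      ∑ i ∈ T, (‖K (e i)‖ ^ 2 + ‖(K†) (e i)‖ ^ 2) :=
  tsum_le_of_sum_le' (sum_nonneg fun _ _ => by positivity)
    (e.sum_norm_commutator_coordProj_apply_sq_le T K)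

end HilbertBasis

end CoordProj

end

/-- any sparse sequence of coordinate projections is a sparse
Følner sequence for every compact operator. -/
theorem stmt_1
    {H : Type*} [NormedAddCommGroup H] [InnerProductSpace ℂ H] [CompleteSpace H]
    (e : HilbertBasis ℕ ℂ H)
    (K : H →L[ℂ] H) (hK : IsCompactOperator K)
    (k : ℕ → ℕ) (hk : StrictMono k)
    (R : ℕ → H → H)
    (hR : ∀ n x, R n x = ∑ i ∈ Finset.range n, ((inner ℂ (e (k i)) x : ℂ) • e (k i))) :
    Filter.Tendsto
      (fun n => hsNormOn e (fun x => K (R n x) - R n (K x)) / Real.sqrt n)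
      Filter.atTop (nhds 0) := by
  have hR' : ∀ n, R n = e.coordProj ((range n).map ⟨k, hk.injective⟩) := fun n =>
    funext fun x => by rw [hR, HilbertBasis.coordProj, sum_map]; rfl
  set a : ℕ → ℝ := fun i => ‖K (e (k i))‖ ^ 2 + ‖(K†) (e (k i))‖ ^ 2
  have ha : Tendsto a atTop (𝓝 0) := by
    have hv := e.orthonormal.comp k hk.injective
    simpa using ((hK.tendsto_apply_orthonormal hv).norm.pow 2).add
      ((hK.tendsto_adjoint_apply_orthonormal hv).norm.pow 2)
  have hbound : ∀ n : ℕ, hsNormOn e (fun x => K (R n x) - R n (K x)) / √n ≤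
      √((n : ℝ)⁻¹ * ∑ i ∈ range n, a i) := fun n => by
    rw [hsNormOn, inv_mul_eq_div, Real.sqrt_div' _ n.cast_nonneg, hR']
    gcongr
    exact (e.tsum_norm_commutator_coordProj_apply_sq_le _ K).trans_eq (sum_map _ _ _)
  refine squeeze_zero (fun n => div_nonneg (Real.sqrt_nonneg _) (Real.sqrt_nonneg _)) hbound ?_
  simpa using ha.cesaro.sqrt
end

section
/- Let S_w be the weighted unilateral shift on ℓ²(ℕ) with weights w_n = log n and domain c₀₀, and P_n the canonical projections. Then lim_{n→∞} ‖[S_w, P_n]‖_{2,B}/‖P_n‖₂ = 0, where ‖[S_w,P_n]‖_{2,B} = √(∑_k ‖[S_w,P_n] e_k‖²) = log n and ‖P_n‖₂ = √n; i.e., {P_n} is a 2-Følner sequence for S_w, but ‖[S_w,P_n]‖_u = log n → ∞ so {P_n} is not quasidiagonalizing. -/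
/-!
On the span of the basis, the commutator `[S, P (n + 1)]` of a weighted shift
`S e k = w k • e (k + 1)` kills every `e k` except `e n`, which it sends to `w n • e (n + 1)`;
by linearity it is the rank-one map `x ↦ w n ⟪e n, x⟫ e (n + 1)`. So its ℓ²-norm over the
basis and its supremum over the unit ball of the domain both equal `‖w n‖`, which is
`log (n + 1)` here; and `log n / √n → 0` while `log n → ∞`.
-/

open Filter Finset

theorem Submodule.span_range_codRestrict_eq_top {R M ι : Type*} [Semiring R] [AddCommMonoid M]
    [Module R M] {D : Submodule R M} {v : ι → M} (hD : D = span R (Set.range v))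
    (hv : ∀ i, v i ∈ D) : span R (Set.range fun i => (⟨v i, hv i⟩ : D)) = ⊤ := by
  subst hD
  convert span_span_coe_preimage (R := R) (s := Set.range v)
  ext ⟨x, hx⟩
  simp [Subtype.ext_iff]

theorem Orthonormal.sum_inner_smul_self {𝕜 E ι : Type*} [RCLike 𝕜] [NormedAddCommGroup E]
    [InnerProductSpace 𝕜 E] [DecidableEq ι] {e : ι → E} (he : Orthonormal 𝕜 e) (s : Finset ι)
    (k : ι) : ∑ i ∈ s, inner 𝕜 (e i) (e k) • e i = if k ∈ s then e k else 0 := by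
  simp [orthonormal_iff_ite.mp he, ite_smul, Finset.sum_ite_eq']

theorem Real.tendsto_log_div_sqrt_atTop :
    Tendsto (fun x : ℝ => Real.log x / √x) atTop (nhds 0) := by
  simpa only [← Real.sqrt_eq_rpow] using
    (isLittleO_log_rpow_atTop one_half_pos).tendsto_div_nhds_zero

namespace WeightedShift

variable {H : Type*} [NormedAddCommGroup H] [InnerProductSpace ℂ H] {e : ℕ → H} {w : ℕ → ℂ}
  {S : H →ₗ.[ℂ] H} {P : ℕ → H →L[ℂ] H}

theorem proj_apply_basis (he : Orthonormal ℂ e)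
    (hP : ∀ n x, P n x = ∑ i ∈ range n, inner ℂ (e i) x • e i) (n k : ℕ) :
    P n (e k) = if k < n then e k else 0 := by
  simp only [hP, he.sum_inner_smul_self, mem_range]

theorem commutator_apply_basis (he : Orthonormal ℂ e) (hedom : ∀ k, e k ∈ S.domain)
    (hS : ∀ k, S ⟨e k, hedom k⟩ = w k • e (k + 1))
    (hP : ∀ n x, P n x = ∑ i ∈ range n, inner ℂ (e i) x • e i)
    (hPmem : ∀ n x, P n x ∈ S.domain) (n k : ℕ) :
    S ⟨P (n + 1) (e k), hPmem _ _⟩ - P (n + 1) (S ⟨e k, hedom k⟩)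
      = (w n * inner ℂ (e n) (e k)) • e (n + 1) := by
  have hPk := proj_apply_basis he hP (n + 1) k
  rw [hS, map_smul, proj_apply_basis he hP (n + 1) (k + 1), orthonormal_iff_ite.mp he]
  rcases lt_trichotomy k n with hk | rfl | hk
  · have hq : (⟨P (n + 1) (e k), hPmem _ _⟩ : S.domain) = ⟨e k, hedom k⟩ :=
      Subtype.ext (hPk.trans (if_pos (by omega)))
    rw [hq, hS]
    simp [hk, hk.ne']
  · have hq : (⟨P (k + 1) (e k), hPmem _ _⟩ : S.domain) = ⟨e k, hedom k⟩ :=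
      Subtype.ext (hPk.trans (if_pos k.lt_succ_self))
    rw [hq, hS]
    simp
  · have hq : (⟨P (n + 1) (e k), hPmem _ _⟩ : S.domain) = 0 :=
      Subtype.ext (hPk.trans (if_neg (by omega)))
    rw [hq, S.map_zero]
    simp [hk.ne, show ¬ k + 1 < n + 1 by omega]

theorem commutator_apply (he : Orthonormal ℂ e)
    (hdom : S.domain = Submodule.span ℂ (Set.range e)) (hedom : ∀ k, e k ∈ S.domain)
    (hS : ∀ k, S ⟨e k, hedom k⟩ = w k • e (k + 1))
    (hP : ∀ n x, P n x = ∑ i ∈ range n, inner ℂ (e i) x • e i)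
    (hPmem : ∀ n x, P n x ∈ S.domain) (n : ℕ) (x : H) (hx : x ∈ S.domain) :
    S ⟨P (n + 1) x, hPmem _ _⟩ - P (n + 1) (S ⟨x, hx⟩)
      = (w n * inner ℂ (e n) x) • e (n + 1) := by
  let Pn : S.domain →ₗ[ℂ] S.domain :=
    LinearMap.codRestrict S.domain ((P (n + 1)).toLinearMap ∘ₗ S.domain.subtype) fun y => hPmem _ y
  let commutator : S.domain →ₗ[ℂ] H := S.toFun ∘ₗ Pn - (P (n + 1)).toLinearMap ∘ₗ S.toFun
  let rankOne : S.domain →ₗ[ℂ] H :=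
    ((innerₛₗ ℂ (e n)).comp S.domain.subtype).smulRight (w n • e (n + 1))
  have h : commutator = rankOne := by
    refine LinearMap.ext_on_range (Submodule.span_range_codRestrict_eq_top hdom hedom) fun k => ?_
    change S ⟨P (n + 1) (e k), hPmem _ _⟩ - P (n + 1) (S ⟨e k, hedom k⟩) = _
    simp [rankOne, commutator_apply_basis he hedom hS hP hPmem, smul_smul, mul_comm]
  exact (LinearMap.congr_fun h ⟨x, hx⟩).trans (by simp [rankOne, smul_smul, mul_comm])

theorem sqrt_tsum_norm_commutator_apply_basis_sq (he : Orthonormal ℂ e)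
    (hedom : ∀ k, e k ∈ S.domain) (hS : ∀ k, S ⟨e k, hedom k⟩ = w k • e (k + 1))
    (hP : ∀ n x, P n x = ∑ i ∈ range n, inner ℂ (e i) x • e i)
    (hPmem : ∀ n x, P n x ∈ S.domain) (n : ℕ) :
    √(∑' k, ‖S ⟨P (n + 1) (e k), hPmem _ _⟩ - P (n + 1) (S ⟨e k, hedom k⟩)‖ ^ 2) = ‖w n‖ := by
  simp_rw [commutator_apply_basis he hedom hS hP hPmem, orthonormal_iff_ite.mp he]
  rw [tsum_eq_single n fun k hk => by simp [Ne.symm hk]]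
  simp [norm_smul, he.1]

theorem iSup_norm_commutator_apply (he : Orthonormal ℂ e)
    (hdom : S.domain = Submodule.span ℂ (Set.range e)) (hedom : ∀ k, e k ∈ S.domain)
    (hS : ∀ k, S ⟨e k, hedom k⟩ = w k • e (k + 1))
    (hP : ∀ n x, P n x = ∑ i ∈ range n, inner ℂ (e i) x • e i)
    (hPmem : ∀ n x, P n x ∈ S.domain) (n : ℕ) :
    ⨆ ψ : {x : H // x ∈ S.domain ∧ ‖x‖ ≤ 1},
      ‖S ⟨P (n + 1) ψ.1, hPmem _ _⟩ - P (n + 1) (S ⟨ψ.1, ψ.2.1⟩)‖ = ‖w n‖ := by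
  have hnorm : ∀ x (hx : x ∈ S.domain),
      ‖S ⟨P (n + 1) x, hPmem _ _⟩ - P (n + 1) (S ⟨x, hx⟩)‖ = ‖w n‖ * ‖inner ℂ (e n) x‖ := by
    intro x hx
    rw [commutator_apply he hdom hedom hS hP hPmem, norm_smul, norm_mul, he.1, mul_one]
  have hle : ∀ ψ : {x : H // x ∈ S.domain ∧ ‖x‖ ≤ 1},
      ‖S ⟨P (n + 1) ψ.1, hPmem _ _⟩ - P (n + 1) (S ⟨ψ.1, ψ.2.1⟩)‖ ≤ ‖w n‖ := by
    rintro ⟨x, hx, hx1⟩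
    rw [hnorm]
    refine mul_le_of_le_one_right (norm_nonneg _) ((norm_inner_le_norm _ _).trans ?_)
    rwa [he.1, one_mul]
  have : Nonempty {x : H // x ∈ S.domain ∧ ‖x‖ ≤ 1} := ⟨⟨0, S.domain.zero_mem, by simp⟩⟩
  refine le_antisymm (ciSup_le hle) (le_ciSup_of_le ⟨_, Set.forall_mem_range.2 hle⟩
    ⟨e n, hedom n, (he.1 n).le⟩ ?_)
  rw [hnorm, inner_self_eq_norm_sq_to_K, he.1]
  simp

end WeightedShift

theorem stmt_9_general
    {H : Type*} [NormedAddCommGroup H] [InnerProductSpace ℂ H]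
    (e : HilbertBasis ℕ ℂ H)
    (S : H →ₗ.[ℂ] H)
    (hdom : S.domain = Submodule.span ℂ (Set.range ⇑e))
    (hedom : ∀ k, (e k : H) ∈ S.domain)
    (hS : ∀ k, S ⟨e k, hedom k⟩ = ((Real.log (k + 1) : ℝ) : ℂ) • e (k + 1))
    (P : ℕ → H →L[ℂ] H)
    (hP : ∀ n x, P n x = ∑ i ∈ Finset.range n, ((inner ℂ (e i) x : ℂ) • e i))
    (hPmem : ∀ n x, P n x ∈ S.domain) :
    (∀ n : ℕ,
      Real.sqrt (∑' k, ‖S ⟨P (n + 1) (e k), hPmem (n + 1) (e k)⟩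
          - P (n + 1) (S ⟨e k, hedom k⟩)‖ ^ 2) = Real.log (n + 1)) ∧
    Filter.Tendsto (fun n : ℕ =>
        Real.sqrt (∑' k, ‖S ⟨P n (e k), hPmem n (e k)⟩
          - P n (S ⟨e k, hedom k⟩)‖ ^ 2) / Real.sqrt n)
      Filter.atTop (nhds 0) ∧
    (∀ n : ℕ,
      (⨆ ψ : {x : H // x ∈ S.domain ∧ ‖x‖ ≤ 1},
        ‖S ⟨P (n + 1) ψ.1, hPmem (n + 1) ψ.1⟩ - P (n + 1) (S ⟨ψ.1, ψ.2.1⟩)‖)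
          = Real.log (n + 1)) ∧
    Filter.Tendsto (fun n : ℕ =>
        ⨆ ψ : {x : H // x ∈ S.domain ∧ ‖x‖ ≤ 1},
          ‖S ⟨P n ψ.1, hPmem n ψ.1⟩ - P n (S ⟨ψ.1, ψ.2.1⟩)‖)
      Filter.atTop Filter.atTop := by
  have hweight (n : ℕ) : ‖((Real.log (n + 1) : ℝ) : ℂ)‖ = Real.log (n + 1) := by
    rw [Complex.norm_real, Real.norm_of_nonneg (Real.log_nonneg (by simp))]
  have hfolner (n : ℕ) := (WeightedShift.sqrt_tsum_norm_commutator_apply_basis_sq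
    e.orthonormal hedom hS hP hPmem n).trans (hweight n)
  have hsup (n : ℕ) := (WeightedShift.iSup_norm_commutator_apply e.orthonormal hdom hedom hS hP
    hPmem n).trans (hweight n)
  have hshift : Tendsto (fun n : ℕ => (n : ℝ) + 1) atTop atTop :=
    tendsto_atTop_add_const_right _ _ tendsto_natCast_atTop_atTop
  refine ⟨hfolner, ?_, hsup, ?_⟩
  · rw [← tendsto_add_atTop_iff_nat 1]
    simp only [hfolner, Nat.cast_add_one]
    exact Real.tendsto_log_div_sqrt_atTop.comp hshift
  · rw [← tendsto_add_atTop_iff_nat 1]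
    simp only [hsup]
    exact Real.tendsto_log_atTop.comp hshift

/-- for the weighted shift with logarithmic weights
(`S e_k = log(k+1) • e (k+1)`, i.e. weights `w_n = log n` in 1-based indexing),
the canonical projections form a 2-Følner sequence
(`‖[S,P_n]‖_{2,B}/‖P_n‖₂ = log n/√n → 0`) but are not quasidiagonalizing
(`‖[S,P_n]‖_u = log n → ∞`). -/
theorem stmt_9
    {H : Type*} [NormedAddCommGroup H] [InnerProductSpace ℂ H] [CompleteSpace H]
    (e : HilbertBasis ℕ ℂ H)
    (S : H →ₗ.[ℂ] H)
    (hdom : S.domain = Submodule.span ℂ (Set.range ⇑e))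
    (hedom : ∀ k, (e k : H) ∈ S.domain)
    (hS : ∀ k, S ⟨e k, hedom k⟩ = ((Real.log (k + 1) : ℝ) : ℂ) • e (k + 1))
    (P : ℕ → H →L[ℂ] H)
    (hP : ∀ n x, P n x = ∑ i ∈ Finset.range n, ((inner ℂ (e i) x : ℂ) • e i))
    (hPmem : ∀ n x, P n x ∈ S.domain) :
    (∀ n : ℕ,
      Real.sqrt (∑' k, ‖S ⟨P (n + 1) (e k), hPmem (n + 1) (e k)⟩
          - P (n + 1) (S ⟨e k, hedom k⟩)‖ ^ 2) = Real.log (n + 1)) ∧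
    Filter.Tendsto (fun n : ℕ =>
        Real.sqrt (∑' k, ‖S ⟨P n (e k), hPmem n (e k)⟩
          - P n (S ⟨e k, hedom k⟩)‖ ^ 2) / Real.sqrt n)
      Filter.atTop (nhds 0) ∧
    (∀ n : ℕ,
      (⨆ ψ : {x : H // x ∈ S.domain ∧ ‖x‖ ≤ 1},
        ‖S ⟨P (n + 1) ψ.1, hPmem (n + 1) ψ.1⟩ - P (n + 1) (S ⟨ψ.1, ψ.2.1⟩)‖)
          = Real.log (n + 1)) ∧
    Filter.Tendsto (fun n : ℕ =>
        ⨆ ψ : {x : H // x ∈ S.domain ∧ ‖x‖ ≤ 1},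
          ‖S ⟨P n ψ.1, hPmem n ψ.1⟩ - P n (S ⟨ψ.1, ψ.2.1⟩)‖)
      Filter.atTop Filter.atTop :=
  stmt_9_general e S hdom hedom hS P hP hPmem
end

section
/- Let A be the operator on ℓ²(ℕ) with domain c₀₀ defined by A e_{2j−1} = (2j−1)² e_{2j−1} + (1/(2j−1)) e_{2j} and A e_{2j} = (2j)² e_{2j}. Let P_n be the canonical projections. Then ‖[A, P_{2j−1}]‖_u = 1/(2j−1) → 0 and ‖[A, P_{2j}]‖_u = 0, so {P_n} is quasidiagonalizing for A; however ‖[A², P_{2j−1}]‖_u = ((2j−1)² + (2j)²)/(2j−1) → ∞, so {P_n} is not quasidiagonalizing for A² (with domain c₀₀). -/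
/-!
Put `d k = (k + 1)²`, and `s k = (k + 1)⁻¹` for even `k`, `s k = 0` for odd `k` (the basis is
indexed from `0`). Then `A e_k = d_k e_k + s_k e_{k+1}`, and for such a bidiagonal operator the
commutator `[A, P_{n+1}]` is the rank-one map `x ↦ ⟪e_n, x⟫ s_n e_{n+1}`; over the unit ball of a
domain containing `u`, the supremum of `‖⟪u, x⟫ v‖` is `‖u‖ ‖v‖`. This gives `‖s_n‖`, i.e.
`(2m+1)⁻¹` for `n = 2m` and `0` for `n = 2m+1`.

For the square, `[A², P] = A [A, P] + [A, P] A`. When `n = 2m`, `e_{n+1}` is an eigenvector of `A`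
for `d_{n+1}`, and `⟪e_n, A x⟫ = d_n ⟪e_n, x⟫` because no other basis vector is sent into `e_n`.
So `[A², P_{n+1}]` is again of rank one, now with factor `s_n (d_n + d_{n+1})`, which is
`((2m+1)² + (2m+2)²) / (2m+1)`.
-/

open Filter
open scoped InnerProductSpace

theorem Submodule.linearMap_ext_of_le_span {R E M ι : Type*} [CommRing R] [AddCommGroup E]
    [Module R E] [AddCommGroup M] [Module R M] {D : Submodule R E} {v : ι → E}
    (hv : ∀ i, v i ∈ D) (hD : D ≤ Submodule.span R (Set.range v)) {f g : D →ₗ[R] M}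
    (h : ∀ i, f ⟨v i, hv i⟩ = g ⟨v i, hv i⟩) : f = g := by
  refine LinearMap.ext_on_range (v := fun i => (⟨v i, hv i⟩ : D)) ?_ h
  apply Submodule.map_injective_of_injective D.injective_subtype
  rw [Submodule.map_span, ← Set.range_comp, Submodule.map_top, Submodule.range_subtype]
  exact le_antisymm (Submodule.span_le.2 (Set.range_subset_iff.2 hv)) hD

section InnerProductSpace

variable {𝕜 E : Type*} [RCLike 𝕜] [NormedAddCommGroup E] [InnerProductSpace 𝕜 E]

theorem Orthonormal.sum_inner_smul_eq_ite {ι : Type*} [DecidableEq ι] {e : ι → E}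
    (he : Orthonormal 𝕜 e) (s : Finset ι) (k : ι) :
    ∑ i ∈ s, ⟪e i, e k⟫_𝕜 • e i = if k ∈ s then e k else 0 := by
  simp only [orthonormal_iff_ite.mp he, ite_smul, one_smul, zero_smul, Finset.sum_ite_eq']

namespace LinearPMap

def commutator (T : E →ₗ.[𝕜] E) (P : E →L[𝕜] E) (hP : ∀ x, P x ∈ T.domain) :
    T.domain →ₗ[𝕜] E :=
  T.toFun ∘ₗ (P : E →ₗ[𝕜] E).codRestrict T.domain hP ∘ₗ T.domain.subtype
    - (P : E →ₗ[𝕜] E) ∘ₗ T.toFun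

theorem commutator_apply (T : E →ₗ.[𝕜] E) (P : E →L[𝕜] E) (hP : ∀ x, P x ∈ T.domain)
    (x : T.domain) : T.commutator P hP x = T ⟨P x, hP x⟩ - P (T x) := rfl

theorem iSup_norm_commutator_eq_of_rankOne {T : E →ₗ.[𝕜] E} {P : E →L[𝕜] E}
    (hP : ∀ x, P x ∈ T.domain) {u v : E} (hu : u ∈ T.domain)
    (hcomm : ∀ x, T.commutator P hP x = ⟪u, (x : E)⟫_𝕜 • v) :
    ⨆ ψ : {x : E // x ∈ T.domain ∧ ‖x‖ ≤ 1}, ‖T ⟨P ψ.1, hP ψ.1⟩ - P (T ⟨ψ.1, ψ.2.1⟩)‖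
      = ‖u‖ * ‖v‖ := by
  have hnorm : ∀ x : T.domain, ‖T ⟨P x, hP x⟩ - P (T x)‖ = ‖⟪u, (x : E)⟫_𝕜‖ * ‖v‖ := fun x => by
    rw [← commutator_apply, hcomm, norm_smul]
  have hle : ∀ ψ : {x : E // x ∈ T.domain ∧ ‖x‖ ≤ 1},
      ‖T ⟨P ψ.1, hP ψ.1⟩ - P (T ⟨ψ.1, ψ.2.1⟩)‖ ≤ ‖u‖ * ‖v‖ := fun ψ => by
    rw [hnorm ⟨ψ.1, ψ.2.1⟩]
    gcongr
    calc ‖⟪u, ψ.1⟫_𝕜‖ ≤ ‖u‖ * ‖ψ.1‖ := norm_inner_le_norm _ _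
      _ ≤ ‖u‖ := mul_le_of_le_one_right (norm_nonneg _) ψ.2.2
  have : Nonempty {x : E // x ∈ T.domain ∧ ‖x‖ ≤ 1} := ⟨⟨0, T.domain.zero_mem, by simp⟩⟩
  refine le_antisymm (ciSup_le hle) ?_
  rcases eq_or_ne u 0 with rfl | hu0
  · simpa using Real.iSup_nonneg fun _ => norm_nonneg _
  have hu0' : ‖u‖ ≠ 0 := norm_ne_zero_iff.2 hu0
  have hmem : (‖u‖⁻¹ : 𝕜) • u ∈ T.domain := T.domain.smul_mem _ hu
  have hunit : ‖(‖u‖⁻¹ : 𝕜) • u‖ = 1 := by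
    rw [norm_smul, norm_inv, RCLike.norm_ofReal, abs_norm, inv_mul_cancel₀ hu0']
  refine le_trans (le_of_eq ?_) (le_ciSup ⟨_, Set.forall_mem_range.2 hle⟩ ⟨_, hmem, hunit.le⟩)
  rw [hnorm ⟨_, hmem⟩, inner_smul_right, inner_self_eq_norm_sq_to_K, norm_mul, norm_pow,
    norm_inv, RCLike.norm_ofReal, abs_norm]
  field_simp

theorem commutator_sq_eq_of_rankOne {T S : E →ₗ.[𝕜] E} (hSdom : S.domain = T.domain)
    (hrange : ∀ x : T.domain, T x ∈ T.domain)
    (hS : ∀ (x : T.domain) (h : (x : E) ∈ S.domain), S ⟨x, h⟩ = T ⟨T x, hrange x⟩)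
    {P : E →L[𝕜] E} (hP : ∀ x, P x ∈ T.domain) (hPS : ∀ x, P x ∈ S.domain)
    {u v : E} {a b : 𝕜} (hv : v ∈ T.domain) (hTv : T ⟨v, hv⟩ = b • v)
    (hTu : ∀ x : T.domain, ⟪u, T x⟫_𝕜 = a * ⟪u, (x : E)⟫_𝕜)
    (hcomm : ∀ x, T.commutator P hP x = ⟪u, (x : E)⟫_𝕜 • v) (x : S.domain) :
    S.commutator P hPS x = ⟪u, (x : E)⟫_𝕜 • (a + b) • v := by
  obtain ⟨x, hxS⟩ := x
  let y : T.domain := ⟨x, hSdom ▸ hxS⟩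
  have hTPx : (⟨T ⟨P x, hP x⟩, hrange _⟩ : T.domain) = ⟨P (T y), hP _⟩ + ⟪u, x⟫_𝕜 • ⟨v, hv⟩ :=
    Subtype.ext (eq_add_of_sub_eq' (hcomm y))
  have hTy := hcomm ⟨T y, hrange y⟩
  rw [commutator_apply, hTu] at hTy
  rw [commutator_apply, hS ⟨P x, hP x⟩ (hPS x), hS y hxS, hTPx, map_add, map_smul, hTv,
    add_sub_right_comm, hTy, smul_smul, smul_smul, ← add_smul]
  congr 1
  ring

section Bidiagonal

variable {e : ℕ → E} {T : E →ₗ.[𝕜] E} (he : Orthonormal 𝕜 e) (he_mem : ∀ k, e k ∈ T.domain)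
  (hdom : T.domain ≤ Submodule.span 𝕜 (Set.range e)) {d s : ℕ → 𝕜}
  (hTe : ∀ k, T ⟨e k, he_mem k⟩ = d k • e k + s k • e (k + 1))
include he hdom hTe

theorem commutator_eq_of_bidiagonal (n : ℕ) {P : E →L[𝕜] E}
    (hP : ∀ x, P x = ∑ i ∈ Finset.range (n + 1), ⟪e i, x⟫_𝕜 • e i)
    (hPmem : ∀ x, P x ∈ T.domain) (x : T.domain) :
    T.commutator P hPmem x = ⟪e n, (x : E)⟫_𝕜 • s n • e (n + 1) := by
  classical
  have hPe : ∀ k, P (e k) = if k < n + 1 then e k else 0 := fun k => by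
    simp only [hP, he.sum_inner_smul_eq_ite, Finset.mem_range]
  have hTPe : ∀ k, T ⟨P (e k), hPmem _⟩ = if k < n + 1 then T ⟨e k, he_mem k⟩ else 0 := by
    intro k
    split_ifs with h
    · exact congrArg T (Subtype.ext (show P (e k) = e k by rw [hPe, if_pos h]))
    · rw [← T.map_zero]
      exact congrArg T (Subtype.ext (show P (e k) = 0 by rw [hPe, if_neg h]))
  refine LinearMap.congr_fun (g := ((innerₛₗ 𝕜 (e n)).comp T.domain.subtype).smulRight
    (s n • e (n + 1))) (Submodule.linearMap_ext_of_le_span he_mem hdom fun k => ?_) x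
  rw [commutator_apply, hTPe, hTe, _root_.map_add P, _root_.map_smul P, _root_.map_smul P,
    hPe, hPe]
  simp only [LinearMap.smulRight_apply, LinearMap.comp_apply, Submodule.subtype_apply,
    innerₛₗ_apply_apply, orthonormal_iff_ite.mp he]
  rcases lt_trichotomy k n with hk | rfl | hk
  · simp [hk.ne', show k < n + 1 by omega, hk]
  · simp
  · simp [hk.ne, show ¬ k < n + 1 by omega, show ¬ k < n by omega]

theorem iSup_norm_commutator_eq_of_bidiagonal (n : ℕ) {P : E →L[𝕜] E}
    (hP : ∀ x, P x = ∑ i ∈ Finset.range (n + 1), ⟪e i, x⟫_𝕜 • e i)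
    (hPmem : ∀ x, P x ∈ T.domain) :
    ⨆ ψ : {x : E // x ∈ T.domain ∧ ‖x‖ ≤ 1}, ‖T ⟨P ψ.1, hPmem ψ.1⟩ - P (T ⟨ψ.1, ψ.2.1⟩)‖
      = ‖s n‖ := by
  rw [iSup_norm_commutator_eq_of_rankOne hPmem (he_mem n)
    (commutator_eq_of_bidiagonal he he_mem hdom hTe n hP hPmem), norm_smul, he.1, he.1,
    one_mul, mul_one]

theorem inner_apply_of_bidiagonal (n : ℕ) (hs : ∀ k, k + 1 = n → s k = 0) (x : T.domain) :
    ⟪e n, T x⟫_𝕜 = d n * ⟪e n, (x : E)⟫_𝕜 := by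
  refine LinearMap.congr_fun (f := innerₛₗ 𝕜 (e n) ∘ₗ T.toFun)
    (g := d n • (innerₛₗ 𝕜 (e n) ∘ₗ T.domain.subtype))
    (Submodule.linearMap_ext_of_le_span he_mem hdom fun k => ?_) x
  simp only [LinearMap.comp_apply, LinearMap.smul_apply, Submodule.subtype_apply,
    innerₛₗ_apply_apply, toFun_eq_coe, hTe, inner_add_right, inner_smul_right,
    orthonormal_iff_ite.mp he, smul_eq_mul]
  by_cases hk : k + 1 = n
  · simp [hs k hk, ← hk]
  · split_ifs <;> simp_all

theorem iSup_norm_commutator_sq_eq_of_bidiagonal {S : E →ₗ.[𝕜] E} (hSdom : S.domain = T.domain)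
    (hrange : ∀ x : T.domain, T x ∈ T.domain)
    (hS : ∀ (x : T.domain) (h : (x : E) ∈ S.domain), S ⟨x, h⟩ = T ⟨T x, hrange x⟩)
    (n : ℕ) (hs_prev : ∀ k, k + 1 = n → s k = 0) (hs_next : s (n + 1) = 0) {P : E →L[𝕜] E}
    (hP : ∀ x, P x = ∑ i ∈ Finset.range (n + 1), ⟪e i, x⟫_𝕜 • e i)
    (hPmem : ∀ x, P x ∈ T.domain) (hPS : ∀ x, P x ∈ S.domain) :
    ⨆ ψ : {x : E // x ∈ S.domain ∧ ‖x‖ ≤ 1}, ‖S ⟨P ψ.1, hPS ψ.1⟩ - P (S ⟨ψ.1, ψ.2.1⟩)‖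
      = ‖d n + d (n + 1)‖ * ‖s n‖ := by
  have hv : s n • e (n + 1) ∈ T.domain := T.domain.smul_mem _ (he_mem _)
  have hTv : T ⟨_, hv⟩ = d (n + 1) • s n • e (n + 1) := by
    rw [show (⟨_, hv⟩ : T.domain) = s n • ⟨e (n + 1), he_mem _⟩ from rfl, map_smul, hTe,
      hs_next, zero_smul, add_zero, smul_comm]
  rw [iSup_norm_commutator_eq_of_rankOne hPS (hSdom ▸ he_mem n)
    (commutator_sq_eq_of_rankOne hSdom hrange hS hPmem hPS hv hTv
      (inner_apply_of_bidiagonal he he_mem hdom hTe n hs_prev)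
      (commutator_eq_of_bidiagonal he he_mem hdom hTe n hP hPmem)),
    he.1, one_mul, norm_smul, norm_smul, he.1, mul_one]

end Bidiagonal

end LinearPMap

end InnerProductSpace

namespace QuasidiagExample

def diag (k : ℕ) : ℂ := ((k + 1 : ℕ) : ℂ) ^ 2

noncomputable def subdiag (k : ℕ) : ℂ := if Even k then ((k + 1 : ℕ) : ℂ)⁻¹ else 0

theorem subdiag_of_odd {k : ℕ} (hk : Odd k) : subdiag k = 0 :=
  if_neg (Nat.not_even_iff_odd.2 hk)

theorem norm_subdiag_two_mul (m : ℕ) : ‖subdiag (2 * m)‖ = (2 * m + 1 : ℝ)⁻¹ := by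
  rw [subdiag, if_pos (even_two_mul m), norm_inv, Complex.norm_natCast]
  push_cast
  rfl

theorem norm_subdiag_le (n : ℕ) : ‖subdiag n‖ ≤ 1 / ((n : ℝ) + 1) := by
  unfold subdiag
  split_ifs
  · rw [norm_inv, Complex.norm_natCast, one_div]
    push_cast
    rfl
  · rw [norm_zero]
    positivity

theorem norm_diag_add_mul_norm_subdiag (m : ℕ) :
    ‖diag (2 * m) + diag (2 * m + 1)‖ * ‖subdiag (2 * m)‖
      = ((2 * m + 1 : ℝ) ^ 2 + (2 * m + 2 : ℝ) ^ 2) / (2 * m + 1 : ℝ) := by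
  rw [norm_subdiag_two_mul, diag, diag, ← Nat.cast_pow, ← Nat.cast_pow, ← Nat.cast_add,
    Complex.norm_natCast]
  push_cast
  ring

end QuasidiagExample

theorem stmt_14_general
    {H : Type*} [NormedAddCommGroup H] [InnerProductSpace ℂ H]
    (e : HilbertBasis ℕ ℂ H)
    (A A2 : H →ₗ.[ℂ] H)
    (hdom : A.domain = Submodule.span ℂ (Set.range ⇑e))
    (hdom2 : A2.domain = A.domain)
    (hedom : ∀ k, (e k : H) ∈ A.domain)
    (hAodd : ∀ m : ℕ, A ⟨e (2 * m), hedom (2 * m)⟩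
      = (((2 * m + 1 : ℕ) : ℂ) ^ 2) • e (2 * m)
        + (((2 * m + 1 : ℕ) : ℂ))⁻¹ • e (2 * m + 1))
    (hAeven : ∀ m : ℕ, A ⟨e (2 * m + 1), hedom (2 * m + 1)⟩
      = (((2 * m + 2 : ℕ) : ℂ) ^ 2) • e (2 * m + 1))
    (hrange : ∀ ψ : A.domain, A ψ ∈ A.domain)
    (hA2 : ∀ (ψ : A.domain) (h : (ψ : H) ∈ A2.domain),
      A2 ⟨(ψ : H), h⟩ = A ⟨A ψ, hrange ψ⟩)
    (P : ℕ → H →L[ℂ] H)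
    (hP : ∀ n x, P n x = ∑ i ∈ Finset.range n, ((inner ℂ (e i) x : ℂ) • e i))
    (hPmem : ∀ n x, P n x ∈ A.domain)
    (hPmem2 : ∀ n x, P n x ∈ A2.domain) :
    (∀ m : ℕ,
      (⨆ ψ : {x : H // x ∈ A.domain ∧ ‖x‖ ≤ 1},
        ‖A ⟨P (2 * m + 1) ψ.1, hPmem (2 * m + 1) ψ.1⟩
          - P (2 * m + 1) (A ⟨ψ.1, ψ.2.1⟩)‖)
        = ((2 * m + 1 : ℝ))⁻¹) ∧
    (∀ m : ℕ,
      (⨆ ψ : {x : H // x ∈ A.domain ∧ ‖x‖ ≤ 1},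
        ‖A ⟨P (2 * m + 2) ψ.1, hPmem (2 * m + 2) ψ.1⟩
          - P (2 * m + 2) (A ⟨ψ.1, ψ.2.1⟩)‖) = 0) ∧
    Filter.Tendsto (fun n : ℕ =>
        ⨆ ψ : {x : H // x ∈ A.domain ∧ ‖x‖ ≤ 1},
          ‖A ⟨P n ψ.1, hPmem n ψ.1⟩ - P n (A ⟨ψ.1, ψ.2.1⟩)‖)
      Filter.atTop (nhds 0) ∧
    (∀ m : ℕ,
      (⨆ ψ : {x : H // x ∈ A2.domain ∧ ‖x‖ ≤ 1},
        ‖A2 ⟨P (2 * m + 1) ψ.1, hPmem2 (2 * m + 1) ψ.1⟩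
          - P (2 * m + 1) (A2 ⟨ψ.1, ψ.2.1⟩)‖)
        = ((2 * m + 1 : ℝ) ^ 2 + (2 * m + 2 : ℝ) ^ 2) / (2 * m + 1 : ℝ)) ∧
    Filter.Tendsto (fun m : ℕ =>
        ⨆ ψ : {x : H // x ∈ A2.domain ∧ ‖x‖ ≤ 1},
          ‖A2 ⟨P (2 * m + 1) ψ.1, hPmem2 (2 * m + 1) ψ.1⟩
            - P (2 * m + 1) (A2 ⟨ψ.1, ψ.2.1⟩)‖)
      Filter.atTop Filter.atTop := by
  have hAe : ∀ k, A ⟨e k, hedom k⟩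
      = QuasidiagExample.diag k • e k + QuasidiagExample.subdiag k • e (k + 1) := by
    intro k
    obtain ⟨m, rfl | rfl⟩ := Nat.even_or_odd' k
    · simpa [QuasidiagExample.diag, QuasidiagExample.subdiag] using hAodd m
    · simpa [QuasidiagExample.diag, QuasidiagExample.subdiag_of_odd (odd_two_mul_add_one m),
        add_assoc, one_add_one_eq_two] using hAeven m
  have hsupA := fun n => A.iSup_norm_commutator_eq_of_bidiagonal e.orthonormal hedom hdom.le hAe n
    (hP (n + 1)) (hPmem (n + 1))
  have hsupA2 := fun m => (A.iSup_norm_commutator_sq_eq_of_bidiagonal e.orthonormal hedom hdom.le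
    hAe hdom2 hrange hA2 (2 * m) (fun k hk => QuasidiagExample.subdiag_of_odd ⟨m - 1, by omega⟩)
    (QuasidiagExample.subdiag_of_odd (odd_two_mul_add_one m)) (hP (2 * m + 1)) (hPmem _)
    (hPmem2 _)).trans (QuasidiagExample.norm_diag_add_mul_norm_subdiag m)
  refine ⟨fun m => (hsupA (2 * m)).trans (QuasidiagExample.norm_subdiag_two_mul m),
    fun m => ?_, ?_, hsupA2, ?_⟩
  · rw [hsupA (2 * m + 1), QuasidiagExample.subdiag_of_odd (odd_two_mul_add_one m), norm_zero]
  · refine (tendsto_add_atTop_iff_nat 1).1 (squeeze_zero (fun n => ?_)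
      (fun n => (hsupA n).trans_le (QuasidiagExample.norm_subdiag_le n))
      tendsto_one_div_add_atTop_nhds_zero_nat)
    exact (hsupA n).symm ▸ norm_nonneg _
  · refine tendsto_atTop_mono (fun m => ?_) tendsto_natCast_atTop_atTop
    rw [hsupA2, le_div_iff₀ (by positivity)]
    nlinarith

/-- the operator `A` on `ℓ²` with `A e_{2m} = (2m+1)² e_{2m} +
(2m+1)⁻¹ e_{2m+1}` and `A e_{2m+1} = (2m+2)² e_{2m+1}` (0-based indexing of the
1-based statement) is quasidiagonalized by the canonical projections, but its
square `A²` (same domain `c₀₀`) is not. -/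
theorem stmt_14
    {H : Type*} [NormedAddCommGroup H] [InnerProductSpace ℂ H] [CompleteSpace H]
    (e : HilbertBasis ℕ ℂ H)
    (A A2 : H →ₗ.[ℂ] H)
    (hdom : A.domain = Submodule.span ℂ (Set.range ⇑e))
    (hdom2 : A2.domain = A.domain)
    (hedom : ∀ k, (e k : H) ∈ A.domain)
    (hedom2 : ∀ k, (e k : H) ∈ A2.domain)
    (hAodd : ∀ m : ℕ, A ⟨e (2 * m), hedom (2 * m)⟩
      = (((2 * m + 1 : ℕ) : ℂ) ^ 2) • e (2 * m)
        + (((2 * m + 1 : ℕ) : ℂ))⁻¹ • e (2 * m + 1))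
    (hAeven : ∀ m : ℕ, A ⟨e (2 * m + 1), hedom (2 * m + 1)⟩
      = (((2 * m + 2 : ℕ) : ℂ) ^ 2) • e (2 * m + 1))
    (hrange : ∀ ψ : A.domain, A ψ ∈ A.domain)
    (hA2 : ∀ (ψ : A.domain) (h : (ψ : H) ∈ A2.domain),
      A2 ⟨(ψ : H), h⟩ = A ⟨A ψ, hrange ψ⟩)
    (P : ℕ → H →L[ℂ] H)
    (hP : ∀ n x, P n x = ∑ i ∈ Finset.range n, ((inner ℂ (e i) x : ℂ) • e i))
    (hPmem : ∀ n x, P n x ∈ A.domain)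
    (hPmem2 : ∀ n x, P n x ∈ A2.domain) :
    (∀ m : ℕ,
      (⨆ ψ : {x : H // x ∈ A.domain ∧ ‖x‖ ≤ 1},
        ‖A ⟨P (2 * m + 1) ψ.1, hPmem (2 * m + 1) ψ.1⟩
          - P (2 * m + 1) (A ⟨ψ.1, ψ.2.1⟩)‖)
        = ((2 * m + 1 : ℝ))⁻¹) ∧
    (∀ m : ℕ,
      (⨆ ψ : {x : H // x ∈ A.domain ∧ ‖x‖ ≤ 1},
        ‖A ⟨P (2 * m + 2) ψ.1, hPmem (2 * m + 2) ψ.1⟩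
          - P (2 * m + 2) (A ⟨ψ.1, ψ.2.1⟩)‖) = 0) ∧
    Filter.Tendsto (fun n : ℕ =>
        ⨆ ψ : {x : H // x ∈ A.domain ∧ ‖x‖ ≤ 1},
          ‖A ⟨P n ψ.1, hPmem n ψ.1⟩ - P n (A ⟨ψ.1, ψ.2.1⟩)‖)
      Filter.atTop (nhds 0) ∧
    (∀ m : ℕ,
      (⨆ ψ : {x : H // x ∈ A2.domain ∧ ‖x‖ ≤ 1},
        ‖A2 ⟨P (2 * m + 1) ψ.1, hPmem2 (2 * m + 1) ψ.1⟩
          - P (2 * m + 1) (A2 ⟨ψ.1, ψ.2.1⟩)‖)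
        = ((2 * m + 1 : ℝ) ^ 2 + (2 * m + 2 : ℝ) ^ 2) / (2 * m + 1 : ℝ)) ∧
    Filter.Tendsto (fun m : ℕ =>
        ⨆ ψ : {x : H // x ∈ A2.domain ∧ ‖x‖ ≤ 1},
          ‖A2 ⟨P (2 * m + 1) ψ.1, hPmem2 (2 * m + 1) ψ.1⟩
            - P (2 * m + 1) (A2 ⟨ψ.1, ψ.2.1⟩)‖)
      Filter.atTop Filter.atTop :=
  stmt_14_general e A A2 hdom hdom2 hedom hAodd hAeven hrange hA2 P hP hPmem hPmem2
end

section
/- The Weyl algebra W = ℂ⟨p, q | qp − pq = i·1⟩ is algebraically amenable: for every ε > 0 and every finite set F ⊆ W there exists a nonzero finite-dimensional linear subspace V ⊆ W with dim(aV + V) ≤ (1 + ε) dim(V) for every a ∈ F. -/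
/-- The canonical commutation relation `q * p = p * q + i` on the free algebra
on two generators `p = ι false`, `q = ι true`. -/
inductive WeylRel : FreeAlgebra ℂ Bool → FreeAlgebra ℂ Bool → Prop
  | ccr : WeylRel (FreeAlgebra.ι ℂ true * FreeAlgebra.ι ℂ false)
      (FreeAlgebra.ι ℂ false * FreeAlgebra.ι ℂ true
        + algebraMap ℂ (FreeAlgebra ℂ Bool) Complex.I)

/-- The Weyl algebra `W = ℂ⟨p, q | qp - pq = i·1⟩`. -/
abbrev WeylAlgebra := RingQuot WeylRel

/-!
The normally ordered monomials `p ^ k * q ^ l` with `k + l ≤ n` span a subspace `V n`.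
Moving `q` to the right with `q p ^ (k + 1) = p ^ (k + 1) q + (k + 1) i p ^ k` gives
`V m * V n ⊆ V (m + n)`, and the `V n` exhaust `W`. The monomials are linearly independent, since
in the Schrödinger representation `p ↦ X`, `q ↦ i d/dX` on `ℂ[X]` the operator `X ^ k (d/dX) ^ l`
kills `X ^ m` for `m < l` and sends `X ^ l` to a nonzero multiple of `X ^ k`. Hence
`dim V n = (n + 1) (n + 2) / 2` grows polynomially, so for `F ⊆ V d` we have
`dim (a V n + V n) ≤ dim V (n + d) ≤ (1 + ε) dim V n` once `n` is large.
-/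

namespace WeylAlgebra

open Module Submodule

noncomputable def p : WeylAlgebra := RingQuot.mkAlgHom ℂ WeylRel (FreeAlgebra.ι ℂ false)

noncomputable def q : WeylAlgebra := RingQuot.mkAlgHom ℂ WeylRel (FreeAlgebra.ι ℂ true)

theorem q_mul_p : q * p = p * q + algebraMap ℂ WeylAlgebra Complex.I := by
  simpa [p, q] using RingQuot.mkAlgHom_rel ℂ WeylRel.ccr

theorem q_mul_p_pow_succ (k : ℕ) :
    q * p ^ (k + 1) = p ^ (k + 1) * q + ((k + 1 : ℂ) * Complex.I) • p ^ k := by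
  induction k with
  | zero => simpa [Algebra.algebraMap_eq_smul_one] using q_mul_p
  | succ k ih =>
    rw [pow_succ p (k + 1), ← mul_assoc, ih, add_mul, mul_assoc, q_mul_p, mul_add,
      ← mul_assoc, smul_mul_assoc, ← pow_succ, ← pow_succ, ← Algebra.commutes,
      ← Algebra.smul_def]
    push_cast
    module

noncomputable def monomial (i : ℕ × ℕ) : WeylAlgebra := p ^ i.1 * q ^ i.2

def exponentsLE (n : ℕ) : Finset (ℕ × ℕ) :=
  (Finset.range (n + 1)).biUnion Finset.HasAntidiagonal.antidiagonal

theorem mem_exponentsLE {n : ℕ} {i : ℕ × ℕ} : i ∈ exponentsLE n ↔ i.1 + i.2 ≤ n := by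
  simp [exponentsLE, Finset.HasAntidiagonal.mem_antidiagonal]

theorem two_mul_card_exponentsLE (n : ℕ) : 2 * (exponentsLE n).card = (n + 1) * (n + 2) := by
  have hdisj :
      (Finset.range (n + 1) : Set ℕ).PairwiseDisjoint Finset.HasAntidiagonal.antidiagonal :=
    fun x _ y _ hxy => Finset.disjoint_left.2 fun i hx hy =>
      hxy ((Finset.HasAntidiagonal.mem_antidiagonal.1 hx).symm.trans
        (Finset.HasAntidiagonal.mem_antidiagonal.1 hy))
  have hgauss := Finset.sum_range_id_mul_two (n + 2)
  rw [Finset.sum_range_succ'] at hgauss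
  rw [exponentsLE, Finset.card_biUnion hdisj]
  simp only [Finset.Nat.card_antidiagonal]
  simpa [mul_comm, Nat.mul_comm (n + 2)] using hgauss

theorem exists_card_exponentsLE_add_le (d : ℕ) {ε : ℝ} (hε : 0 < ε) :
    ∃ n, ((exponentsLE (n + d)).card : ℝ) ≤ (1 + ε) * (exponentsLE n).card := by
  obtain ⟨n, hn⟩ := exists_nat_ge ((d * (d + 3) : ℝ) / ε)
  refine ⟨n, ?_⟩
  -- with `c m = #(exponentsLE m)`: `2 (c (n + d) - c n) = d (2n + d + 3) ≤ d (d + 3) (n + 1)`,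
  -- and `d (d + 3) (n + 1) ≤ ε n (n + 1) ≤ 2 ε c n`
  have h := two_mul_card_exponentsLE
  have key : (d * (d + 3) : ℝ) ≤ ε * n := by rwa [div_le_iff₀' hε] at hn
  have h1 : (2 * (exponentsLE (n + d)).card : ℝ) = (n + d + 1) * (n + d + 2) := by
    exact_mod_cast h (n + d)
  have h0 : (2 * (exponentsLE n).card : ℝ) = (n + 1) * (n + 2) := by exact_mod_cast h n
  have hn0 : (0 : ℝ) ≤ n := n.cast_nonneg
  have hd0 : (0 : ℝ) ≤ d := d.cast_nonneg
  nlinarith [mul_le_mul_of_nonneg_right key (by positivity : (0 : ℝ) ≤ n + 1),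
    mul_nonneg hε.le hn0, mul_nonneg (mul_nonneg hd0 hn0) (by positivity : (0 : ℝ) ≤ d + 1)]

noncomputable def filtration (n : ℕ) : Submodule ℂ WeylAlgebra :=
  span ℂ (monomial '' exponentsLE n)

instance (n : ℕ) : FiniteDimensional ℂ (filtration n) :=
  FiniteDimensional.span_of_finite ℂ ((exponentsLE n).finite_toSet.image monomial)

theorem monomial_mem_filtration {n : ℕ} {i : ℕ × ℕ} (h : i.1 + i.2 ≤ n) :
    monomial i ∈ filtration n :=
  subset_span ⟨i, mem_exponentsLE.2 h, rfl⟩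

theorem filtration_mono : Monotone filtration := fun _ _ h =>
  span_mono (Set.image_mono fun _ hi => mem_exponentsLE.2 ((mem_exponentsLE.1 hi).trans h))

theorem map_filtration_le {f : WeylAlgebra →ₗ[ℂ] WeylAlgebra} {n : ℕ}
    {N : Submodule ℂ WeylAlgebra} (h : ∀ i : ℕ × ℕ, i.1 + i.2 ≤ n → f (monomial i) ∈ N) :
    (filtration n).map f ≤ N :=
  (map_span_le f _ N).2 fun _ ⟨i, hi, hfi⟩ => hfi ▸ h i (mem_exponentsLE.1 hi)

theorem mul_mem_filtration_of_monomial {y : WeylAlgebra} {n e : ℕ}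
    (h : ∀ i : ℕ × ℕ, i.1 + i.2 ≤ n → y * monomial i ∈ filtration (n + e))
    {x : WeylAlgebra} (hx : x ∈ filtration n) : y * x ∈ filtration (n + e) :=
  map_filtration_le (f := LinearMap.mulLeft ℂ y) h (mem_map_of_mem hx)

theorem p_mul_mem_filtration {n : ℕ} {x : WeylAlgebra} (hx : x ∈ filtration n) :
    p * x ∈ filtration (n + 1) := by
  refine mul_mem_filtration_of_monomial (fun ⟨k, l⟩ hkl => ?_) hx
  rw [monomial, ← mul_assoc, ← pow_succ']
  exact monomial_mem_filtration (n := n + 1) (i := (k + 1, l)) (by simp only at hkl ⊢; omega)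

theorem q_mul_mem_filtration {n : ℕ} {x : WeylAlgebra} (hx : x ∈ filtration n) :
    q * x ∈ filtration (n + 1) := by
  refine mul_mem_filtration_of_monomial (fun ⟨k, l⟩ hkl => ?_) hx
  simp only at hkl
  rcases k with _ | k
  · rw [show q * monomial (0, l) = monomial (0, l + 1) by simp [monomial, pow_succ']]
    exact monomial_mem_filtration (n := n + 1) (i := (0, l + 1)) (by simp only; omega)
  · rw [monomial, ← mul_assoc, q_mul_p_pow_succ, add_mul, mul_assoc, ← pow_succ',
      smul_mul_assoc]
    exact add_mem
      (monomial_mem_filtration (n := n + 1) (i := (k + 1, l + 1)) (by simp only; omega))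
      (smul_mem _ _ (monomial_mem_filtration (n := n + 1) (i := (k, l)) (by simp only; omega)))

theorem pow_mul_mem_filtration {y : WeylAlgebra}
    (hy : ∀ n x, x ∈ filtration n → y * x ∈ filtration (n + 1)) (k : ℕ) {n : ℕ}
    {x : WeylAlgebra} (hx : x ∈ filtration n) : y ^ k * x ∈ filtration (n + k) := by
  induction k with
  | zero => simpa using hx
  | succ k ih => simpa [pow_succ', mul_assoc, ← add_assoc] using hy _ _ ih

theorem mul_mem_filtration {m n : ℕ} {x y : WeylAlgebra} (hx : x ∈ filtration m)
    (hy : y ∈ filtration n) : x * y ∈ filtration (m + n) := by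
  refine map_filtration_le (f := LinearMap.mulRight ℂ y) (fun ⟨k, l⟩ hkl => ?_)
    (mem_map_of_mem hx)
  rw [LinearMap.mulRight_apply, monomial, mul_assoc]
  refine filtration_mono ?_ (pow_mul_mem_filtration (fun _ _ => p_mul_mem_filtration) k
    (pow_mul_mem_filtration (fun _ _ => q_mul_mem_filtration) l hy))
  simp only at hkl
  omega

theorem exists_mem_filtration (a : WeylAlgebra) : ∃ n, a ∈ filtration n := by
  obtain ⟨x, rfl⟩ := RingQuot.mkAlgHom_surjective ℂ WeylRel a
  induction x with
  | grade0 r =>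
    refine ⟨0, ?_⟩
    rw [AlgHom.commutes, Algebra.algebraMap_eq_smul_one]
    exact smul_mem _ r (by simpa [monomial] using monomial_mem_filtration (i := (0, 0)) le_rfl)
  | grade1 b =>
    refine ⟨1, ?_⟩
    cases b
    · simpa [monomial, p] using monomial_mem_filtration (n := 1) (i := (1, 0)) le_rfl
    · simpa [monomial, q] using monomial_mem_filtration (n := 1) (i := (0, 1)) le_rfl
  | mul x y hx hy =>
    obtain ⟨m, hm⟩ := hx
    obtain ⟨n, hn⟩ := hy
    exact ⟨m + n, by rw [map_mul]; exact mul_mem_filtration hm hn⟩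
  | add x y hx hy =>
    obtain ⟨m, hm⟩ := hx
    obtain ⟨n, hn⟩ := hy
    refine ⟨max m n, ?_⟩
    rw [map_add]
    exact add_mem (filtration_mono (le_max_left m n) hm) (filtration_mono (le_max_right m n) hn)

section Schrodinger

open Polynomial

noncomputable def schrodinger : WeylAlgebra →ₐ[ℂ] Module.End ℂ ℂ[X] :=
  RingQuot.liftAlgHom ℂ ⟨FreeAlgebra.lift ℂ fun b =>
      if b then Complex.I • derivative else LinearMap.mulLeft ℂ X, by
    rintro _ _ ⟨⟩
    refine LinearMap.ext fun f => ?_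
    simp [add_comm]⟩

theorem schrodinger_monomial_X_pow (i : ℕ × ℕ) (m : ℕ) :
    schrodinger (monomial i) (X ^ m) =
      (Complex.I ^ i.2 * (m.descFactorial i.2 : ℂ)) • X ^ (i.1 + (m - i.2)) := by
  have hp : schrodinger p = LinearMap.mulLeft ℂ X := by
    simp [schrodinger, p, RingQuot.liftAlgHom_mkAlgHom_apply]
  have hq : schrodinger q = Complex.I • derivative := by
    simp [schrodinger, q, RingQuot.liftAlgHom_mkAlgHom_apply]
  rw [monomial, map_mul, map_pow schrodinger, map_pow schrodinger, hp, hq, LinearMap.pow_mulLeft,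
    Module.End.mul_apply, _root_.smul_pow, LinearMap.smul_apply, Module.End.pow_apply,
    iterate_derivative_X_pow_eq_smul, smul_smul, LinearMap.map_smul, LinearMap.mulLeft_apply,
    ← pow_add]

theorem linearIndependent_monomial : LinearIndependent ℂ monomial := by
  refine LinearIndependent.of_comp schrodinger.toLinearMap
    (linearIndependent_iff'.2 fun s g hg => ?_)
  suffices ∀ l k, (k, l) ∈ s → g (k, l) = 0 from fun i hi => this i.2 i.1 hi
  intro l
  induction l using Nat.strong_induction_on with
  | _ l ih =>
  intro k hk
  -- the coefficient of `X ^ k` in the image of `X ^ l` only sees the monomials with `l' ≤ l`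
  have hcoeff := congrArg (fun T : Module.End ℂ ℂ[X] => (T (X ^ l)).coeff k) hg
  simp only [AlgHom.coe_toLinearMap, Function.comp_apply, LinearMap.coe_sum, LinearMap.coe_smul,
    Finset.sum_apply, Pi.smul_apply, schrodinger_monomial_X_pow, finsetSum_coeff, coeff_smul,
    coeff_X_pow, smul_eq_mul, mul_ite, mul_one, mul_zero, LinearMap.zero_apply,
    coeff_zero] at hcoeff
  rw [Finset.sum_eq_single (k, l)] at hcoeff
  · simpa [Nat.descFactorial_self, Nat.factorial_ne_zero, Complex.I_ne_zero] using hcoeff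
  · rintro ⟨k', l'⟩ hkl' hne
    rcases lt_trichotomy l' l with h | rfl | h
    · simp [ih l' h k' hkl']
    · simp only [Nat.sub_self, add_zero]
      exact if_neg fun h => hne (by rw [h])
    · simp [Nat.descFactorial_eq_zero_iff_lt.2 h]
  · exact absurd hk

end Schrodinger

theorem finrank_filtration (n : ℕ) : finrank ℂ (filtration n) = (exponentsLE n).card := by
  rw [filtration, Set.image_eq_range]
  exact (finrank_span_eq_card (linearIndependent_monomial.comp _ Subtype.val_injective)).trans
    (Fintype.card_coe _)

end WeylAlgebra

/-- the Weyl algebra is algebraically amenable: for every `ε > 0`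
and every finite subset `F`, there is a nonzero finite-dimensional subspace `V`
with `dim (a V + V) ≤ (1 + ε) dim V` for all `a ∈ F`. -/
theorem stmt_15 {ε : ℝ} (hε : 0 < ε) (F : Finset WeylAlgebra) :
    ∃ V : Submodule ℂ WeylAlgebra, V ≠ ⊥ ∧ FiniteDimensional ℂ V ∧
      ∀ a ∈ F,
        (Module.finrank ℂ ↥(Submodule.map (LinearMap.mulLeft ℂ a) V ⊔ V) : ℝ)
          ≤ (1 + ε) * (Module.finrank ℂ ↥V : ℝ) := by
  choose deg hdeg using WeylAlgebra.exists_mem_filtration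
  set d := F.sup deg
  obtain ⟨n, hn⟩ := WeylAlgebra.exists_card_exponentsLE_add_le d hε
  refine ⟨WeylAlgebra.filtration n, (Submodule.ne_bot_iff _).2
    ⟨_, WeylAlgebra.monomial_mem_filtration (i := (0, 0)) (Nat.zero_le n),
      WeylAlgebra.linearIndependent_monomial.ne_zero _⟩, inferInstance, fun a ha => ?_⟩
  have hle : (WeylAlgebra.filtration n).map (LinearMap.mulLeft ℂ a) ⊔ WeylAlgebra.filtration n ≤
      WeylAlgebra.filtration (n + d) := by
    refine sup_le ?_ (WeylAlgebra.filtration_mono le_self_add)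
    rintro _ ⟨x, hx, rfl⟩
    rw [add_comm]
    exact WeylAlgebra.mul_mem_filtration (WeylAlgebra.filtration_mono (F.le_sup ha) (hdeg a)) hx
  calc _ ≤ (Module.finrank ℂ (WeylAlgebra.filtration (n + d)) : ℝ) := by
        exact_mod_cast Submodule.finrank_mono hle
    _ ≤ _ := by rwa [WeylAlgebra.finrank_filtration, WeylAlgebra.finrank_filtration]
end

section
/- With a, a* as above and P_n the canonical projections on ℓ²(ℕ₀): the operator (a*)² + a² with domain c₀₀ satisfies ‖[(a*)² + a², P_n]‖_{a,B}/‖P_n‖_a ≥ n^{1 − 1/a} for a ∈ {1,2}; consequently {P_n} is neither a 1-Følner nor a 2-Følner sequence for the squared position operator Q² = ((a*+a)/√2)² (equivalently for P²), since a*a + aa* is diagonal in the basis and ‖[Q², P_n]‖_{a,B} = (1/2)‖[(a*)² + a², P_n]‖_{a,B}. -/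
open Filter

/-- The extended trace-class norm `‖A‖₁ = ∑ ⟨|A| e_k, e_k⟩` of a bounded
operator, computed with respect to the orthonormal basis `e`. -/
noncomputable def trNormOn {H : Type*} [NormedAddCommGroup H] [InnerProductSpace ℂ H]
    [CompleteSpace H] (e : HilbertBasis ℕ ℂ H) (A : H →L[ℂ] H) : ℝ :=
  ∑' k, RCLike.re (inner ℂ (CFC.sqrt (ContinuousLinearMap.adjoint A * A) (e k)) (e k) : ℂ)

/-! The commutator `[B₂, P_n]` only moves the basis vectors across the cut at `n`: with
`w m = √(m (m + 1))` (`sqrtPronic`) and `K i j = |e_j⟩⟨e_i| - |e_i⟩⟨e_j|` (`skewPair`) it equals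
`w (n - 1) • K (n - 2) n + w n • K (n - 1) (n + 1)`. The two skew blocks act on orthogonal planes,
so `|[B₂, P_n]| = w (n - 1) • Π (n - 2) n + w n • Π (n - 1) (n + 1)` with `Π i j` (`projPair`)
the projection onto `span {e_i, e_j}`. Hence the trace norm is `2 (w (n - 1) + w n) ≥ 2 n` and
the squared Hilbert–Schmidt norm is `2 (w (n - 1)² + w n²) ≥ 2 n²`. The diagonal part of `Q²`
commutes with `P_n`, so `[Q², P_n] = ½ [B₂, P_n]`. -/

open InnerProductSpace ContinuousLinearMap

lemma HilbertBasis.continuousLinearMap_ext {ι 𝕜 E F : Type*} [RCLike 𝕜] [NormedAddCommGroup E]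
    [InnerProductSpace 𝕜 E] [NormedAddCommGroup F] [NormedSpace 𝕜 F] (b : HilbertBasis ι 𝕜 E)
    {f g : E →L[𝕜] F} (h : ∀ i, f (b i) = g (b i)) : f = g :=
  ContinuousLinearMap.ext_on (Submodule.dense_iff_topologicalClosure_eq_top.mpr b.dense_span)
    (Set.forall_mem_range.mpr h)

section Blocks

variable {ι H : Type*} [NormedAddCommGroup H] [InnerProductSpace ℂ H]

noncomputable def skewPair (v : ι → H) (i j : ι) : H →L[ℂ] H :=
  rankOne ℂ (v j) (v i) - rankOne ℂ (v i) (v j)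

noncomputable def projPair (v : ι → H) (i j : ι) : H →L[ℂ] H :=
  rankOne ℂ (v i) (v i) + rankOne ℂ (v j) (v j)

variable {v : ι → H}

section DecidableEq

variable [DecidableEq ι]

lemma Orthonormal.rankOne_mul_rankOne (hv : Orthonormal ℂ v) (a b c d : ι) :
    rankOne ℂ (v a) (v b) * rankOne ℂ (v c) (v d) =
      if b = c then rankOne ℂ (v a) (v d) else 0 := by
  rw [mul_def, rankOne_comp_rankOne, orthonormal_iff_ite.mp hv]
  split_ifs <;> simp

lemma Orthonormal.skewPair_apply (hv : Orthonormal ℂ v) (i j k : ι) :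
    skewPair v i j (v k) = (if i = k then v j else 0) - (if j = k then v i else 0) := by
  simp [skewPair, orthonormal_iff_ite.mp hv]

end DecidableEq

lemma Orthonormal.smul_projPair_add_mul_self (hv : Orthonormal ℂ v) {c c' : ℝ} {i j i' j' : ι}
    (h : c = 0 ∨ (i ≠ j ∧ i ≠ i' ∧ i ≠ j' ∧ j ≠ i' ∧ j ≠ j')) (h' : i' ≠ j') :
    (c • projPair v i j + c' • projPair v i' j') *
        (c • projPair v i j + c' • projPair v i' j') =
      (c ^ 2) • projPair v i j + (c' ^ 2) • projPair v i' j' := by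
  classical
  rcases h with rfl | ⟨h1, h2, h3, h4, h5⟩
  · simp [projPair, mul_add, add_mul, hv.rankOne_mul_rankOne, h', h'.symm, sq, smul_smul]
  · simp [projPair, mul_add, add_mul, hv.rankOne_mul_rankOne, h1, h2, h3, h4, h5, h',
      h1.symm, h2.symm, h3.symm, h4.symm, h5.symm, h'.symm, sq, smul_smul]

lemma Orthonormal.hasSum_re_inner_projPair (hv : Orthonormal ℂ v) (i j : ι) :
    HasSum (fun k ↦ RCLike.re (inner ℂ (projPair v i j (v k)) (v k))) 2 := by
  classical
  have h : ∀ k, RCLike.re (inner ℂ (projPair v i j (v k)) (v k)) =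
      (if k = i then 1 else 0) + (if k = j then 1 else 0) := by
    intro k
    simp only [projPair, add_apply, rankOne_apply, inner_add_left, inner_smul_left, map_add]
    rw [orthonormal_iff_ite.mp hv, orthonormal_iff_ite.mp hv]
    split_ifs <;> subst_vars <;> simp_all
  simp only [h]
  convert (hasSum_ite_eq i (1 : ℝ)).add (hasSum_ite_eq j (1 : ℝ)) using 1
  norm_num

lemma Orthonormal.hasSum_re_inner_smul_projPair_add (hv : Orthonormal ℂ v) (c c' : ℝ)
    (i j i' j' : ι) :
    HasSum (fun k ↦ RCLike.re (inner ℂ ((c • projPair v i j + c' • projPair v i' j') (v k)) (v k)))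
      (2 * c + 2 * c') := by
  simp only [add_apply, FunLike.coe_smul, Pi.smul_apply, inner_add_left, map_add,
    RCLike.real_smul_eq_coe_smul (K := ℂ), inner_smul_real_left, smul_eq_mul,
    RCLike.re_ofReal_mul]
  simpa [mul_comm] using ((hv.hasSum_re_inner_projPair i j).mul_left c).add
    ((hv.hasSum_re_inner_projPair i' j').mul_left c')

variable [CompleteSpace H]

lemma star_skewPair (i j : ι) : star (skewPair v i j) = -skewPair v i j := by
  simp [skewPair, star_eq_adjoint]

lemma Orthonormal.star_mul_self_smul_skewPair_add (hv : Orthonormal ℂ v) {c c' : ℝ}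
    {i j i' j' : ι} (h : c = 0 ∨ (i ≠ j ∧ i ≠ i' ∧ i ≠ j' ∧ j ≠ i' ∧ j ≠ j')) (h' : i' ≠ j') :
    star (c • skewPair v i j + c' • skewPair v i' j') *
        (c • skewPair v i j + c' • skewPair v i' j') =
      (c ^ 2) • projPair v i j + (c' ^ 2) • projPair v i' j' := by
  classical
  simp only [star_add, star_smul, star_trivial, star_skewPair]
  rcases h with rfl | ⟨h1, h2, h3, h4, h5⟩
  · simp [skewPair, projPair, mul_sub, sub_mul, hv.rankOne_mul_rankOne, h', h'.symm, sq,
      smul_smul]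
  · simp [skewPair, projPair, mul_sub, sub_mul, mul_add, add_mul, hv.rankOne_mul_rankOne, h1, h2,
      h3, h4, h5, h', h1.symm, h2.symm, h3.symm, h4.symm, h5.symm, h'.symm, sq, smul_sub, smul_smul]

lemma smul_projPair_add_nonneg {c c' : ℝ} (hc : 0 ≤ c) (hc' : 0 ≤ c') (i j i' j' : ι) :
    0 ≤ c • projPair v i j + c' • projPair v i' j' := by
  have hp : ∀ i, 0 ≤ rankOne ℂ (v i) (v i) := fun i ↦
    (nonneg_iff_isPositive _).mpr (isPositive_rankOne_self _)
  exact add_nonneg (smul_nonneg hc (add_nonneg (hp i) (hp j)))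
    (smul_nonneg hc' (add_nonneg (hp i') (hp j')))

end Blocks

section TraceNorms

variable {H : Type*} [NormedAddCommGroup H] [InnerProductSpace ℂ H] [CompleteSpace H]
  (e : HilbertBasis ℕ ℂ H) {c c' : ℝ} {i j i' j' : ℕ}

lemma trNormOn_smul_skewPair_add (hc : 0 ≤ c) (hc' : 0 ≤ c')
    (h : c = 0 ∨ (i ≠ j ∧ i ≠ i' ∧ i ≠ j' ∧ j ≠ i' ∧ j ≠ j')) (h' : i' ≠ j') :
    trNormOn e (c • skewPair e i j + c' • skewPair e i' j') = 2 * c + 2 * c' := by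
  have hS := smul_projPair_add_nonneg (v := e) hc hc' i j i' j'
  rw [trNormOn, ← star_eq_adjoint, e.orthonormal.star_mul_self_smul_skewPair_add h h',
    ← e.orthonormal.smul_projPair_add_mul_self h h', CFC.sqrt_mul_self _ hS]
  exact (e.orthonormal.hasSum_re_inner_smul_projPair_add c c' i j i' j').tsum_eq

lemma tsum_norm_sq_smul_skewPair_add (h : c = 0 ∨ (i ≠ j ∧ i ≠ i' ∧ i ≠ j' ∧ j ≠ i' ∧ j ≠ j'))
    (h' : i' ≠ j') :
    ∑' k, ‖(c • skewPair e i j + c' • skewPair e i' j') (e k)‖ ^ 2 = 2 * c ^ 2 + 2 * c' ^ 2 := by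
  set T := c • skewPair e i j + c' • skewPair e i' j'
  have hT : ∀ k, ‖T (e k)‖ ^ 2 = RCLike.re (inner ℂ ((star T * T) (e k)) (e k)) :=
    fun k ↦ apply_norm_sq_eq_inner_adjoint_left T (e k)
  simp only [hT, T, e.orthonormal.star_mul_self_smul_skewPair_add h h']
  exact (e.orthonormal.hasSum_re_inner_smul_projPair_add _ _ i j i' j').tsum_eq

end TraceNorms

noncomputable def sqrtPronic (m : ℕ) : ℝ := √(m * (m + 1))

@[simp] lemma sqrtPronic_zero : sqrtPronic 0 = 0 := by simp [sqrtPronic]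

lemma sqrtPronic_nonneg (m : ℕ) : 0 ≤ sqrtPronic m := Real.sqrt_nonneg _

lemma natCast_le_sqrtPronic (m : ℕ) : (m : ℝ) ≤ sqrtPronic m :=
  Real.le_sqrt_of_sq_le (by nlinarith)

lemma sqrt_add_one_mul_add_two (k : ℕ) : √((k + 1) * (k + 2)) = sqrtPronic (k + 1) := by
  simp only [sqrtPronic]; push_cast; ring_nf

lemma sqrt_mul_sub_one (k : ℕ) : √(k * (k - 1)) = sqrtPronic (k - 1) := by
  rcases k with _ | k
  · simp
  · simp only [sqrtPronic]; push_cast; ring_nf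

lemma one_le_sqrtPronic_add_div {n : ℕ} (hn : 1 ≤ n) :
    1 ≤ (sqrtPronic (n - 1) + sqrtPronic n) / n := by
  rw [one_le_div (by exact_mod_cast hn)]
  linarith [sqrtPronic_nonneg (n - 1), natCast_le_sqrtPronic n]

lemma sqrt_le_sqrt_two_mul_sq_add_sq_div {n : ℕ} (hn : 1 ≤ n) :
    √n ≤ √(2 * (sqrtPronic (n - 1) ^ 2 + sqrtPronic n ^ 2)) / √n := by
  have hn' : (0 : ℝ) < n := by exact_mod_cast hn
  rw [le_div_iff₀ (Real.sqrt_pos.mpr hn'), Real.mul_self_sqrt hn'.le]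
  refine Real.le_sqrt_of_sq_le ?_
  nlinarith [natCast_le_sqrtPronic n, sq_nonneg (sqrtPronic (n - 1))]

lemma sqrtPronic_pred_eq_zero_or (n : ℕ) : sqrtPronic (n - 1) = 0 ∨
    (n - 2 ≠ n ∧ n - 2 ≠ n - 1 ∧ n - 2 ≠ n + 1 ∧ n ≠ n - 1 ∧ n ≠ n + 1) := by
  rcases lt_or_ge n 2 with hn | hn
  · left; interval_cases n <;> simp
  · right; omega

section Commutator

variable {H : Type*} [NormedAddCommGroup H] [InnerProductSpace ℂ H]

lemma Orthonormal.sum_range_inner_smul {v : ℕ → H} (hv : Orthonormal ℂ v) (n k : ℕ) :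
    ∑ i ∈ Finset.range n, inner ℂ (v i) (v k) • v i = if k < n then v k else 0 := by
  simp [orthonormal_iff_ite.mp hv]

noncomputable def cutCommutator (v : ℕ → H) (n : ℕ) : H →L[ℂ] H :=
  sqrtPronic (n - 1) • skewPair v (n - 2) n + sqrtPronic n • skewPair v (n - 1) (n + 1)

lemma Orthonormal.ladder_commutator_apply {v : ℕ → H} (hv : Orthonormal ℂ v) (n k : ℕ) :
    (if k < n then sqrtPronic (k + 1) • v (k + 2) + sqrtPronic (k - 1) • v (k - 2) else 0)
      - (sqrtPronic (k + 1) • (if k + 2 < n then v (k + 2) else 0)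
        + sqrtPronic (k - 1) • (if k - 2 < n then v (k - 2) else 0)) =
      cutCommutator v n (v k) := by
  simp only [cutCommutator, add_apply, FunLike.coe_smul, Pi.smul_apply, hv.skewPair_apply]
  -- `[k < n] - [k + 2 < n]` is the indicator of `k ∈ {n - 2, n - 1}` and `[k < n] - [k - 2 < n]`
  -- that of `k ∈ {n, n + 1}`; for `n, k < 2` truncated subtraction is absorbed by
  -- `sqrtPronic 0 = 0`.
  rcases n with _ | _ | n <;> rcases k with _ | _ | k <;>
    simp only [Nat.add_sub_cancel, zero_tsub, sqrtPronic_zero] <;>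
    split_ifs <;> (try omega) <;> subst_vars <;> simp_all

lemma commutator_apply_of_apply_eq_ite {B : H →ₗ.[ℂ] H} {P C : H →L[ℂ] H}
    {hPmem : ∀ x, P x ∈ B.domain} (hC : ∀ ψ : B.domain, C ψ = B ⟨P ψ, hPmem ψ⟩ - P (B ψ))
    (ψ : B.domain) (p : Prop) [Decidable p] (hψ : P ψ = if p then (ψ : H) else 0) :
    C ψ = (if p then B ψ else 0) - P (B ψ) := by
  rw [hC]
  congr 1
  split_ifs with hp
  · exact congrArg B (Subtype.ext (by simp [hψ, hp]))
  · rw [← B.map_zero]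
    exact congrArg B (Subtype.ext (by simp [hψ, hp]))

variable (e : HilbertBasis ℕ ℂ H)

lemma commutator_ladder_add_diagonal {Q : H →ₗ.[ℂ] H} (hdom : ∀ k, e k ∈ Q.domain) (a : ℝ)
    (d : ℕ → ℂ)
    (hQ : ∀ k : ℕ, Q ⟨e k, hdom k⟩ = (a : ℂ) • (((√((k + 1) * (k + 2)) : ℝ) : ℂ) • e (k + 2)
      + ((√(k * (k - 1)) : ℝ) : ℂ) • e (k - 2) + d k • e k))
    {P C : H →L[ℂ] H} (n : ℕ) (hP : ∀ k, P (e k) = if k < n then e k else 0)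
    {hPmem : ∀ x, P x ∈ Q.domain} (hC : ∀ ψ : Q.domain, C ψ = Q ⟨P ψ, hPmem ψ⟩ - P (Q ψ)) :
    C = a • cutCommutator e n := by
  refine e.continuousLinearMap_ext fun k ↦ ?_
  set X := sqrtPronic (k + 1) • e (k + 2) + sqrtPronic (k - 1) • e (k - 2)
  have hQk : Q ⟨e k, hdom k⟩ = (a : ℂ) • (X + d k • e k) := by
    rw [hQ k, sqrt_add_one_mul_add_two, sqrt_mul_sub_one]
    simp only [X, Complex.coe_smul]
  have hPX : P X = sqrtPronic (k + 1) • (if k + 2 < n then e (k + 2) else 0)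
      + sqrtPronic (k - 1) • (if k - 2 < n then e (k - 2) else 0) := by
    simp only [X, map_add, map_smul_of_tower, hP]
  have hCk : C (e k) = a • ((if k < n then X else 0) - P X) := by
    rw [commutator_apply_of_apply_eq_ite hC ⟨e k, hdom k⟩ (k < n) (hP k), hQk, Complex.coe_smul]
    simp only [map_smul_of_tower, map_add, map_smul, hP]
    split_ifs <;> module
  rw [hCk, hPX, e.orthonormal.ladder_commutator_apply, smul_apply]

variable [CompleteSpace H]

lemma trNormOn_smul_cutCommutator {a : ℝ} (ha : 0 ≤ a) (n : ℕ) :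
    trNormOn e (a • cutCommutator e n) = 2 * a * (sqrtPronic (n - 1) + sqrtPronic n) := by
  rw [cutCommutator, smul_add, smul_smul, smul_smul, trNormOn_smul_skewPair_add e
    (mul_nonneg ha (sqrtPronic_nonneg _)) (mul_nonneg ha (sqrtPronic_nonneg _))
    ((sqrtPronic_pred_eq_zero_or n).imp_left fun h ↦ by rw [h, mul_zero]) (by omega)]
  ring

lemma tsum_norm_sq_smul_cutCommutator (a : ℝ) (n : ℕ) :
    ∑' k, ‖(a • cutCommutator e n) (e k)‖ ^ 2 =
      2 * a ^ 2 * (sqrtPronic (n - 1) ^ 2 + sqrtPronic n ^ 2) := by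
  rw [cutCommutator, smul_add, smul_smul, smul_smul, tsum_norm_sq_smul_skewPair_add e
    ((sqrtPronic_pred_eq_zero_or n).imp_left fun h ↦ by rw [h, mul_zero]) (by omega)]
  ring

end Commutator

lemma not_tendsto_nhds_zero_of_le {f : ℕ → ℝ} {c : ℝ} (hc : 0 < c) (h : ∀ n, 1 ≤ n → c ≤ f n) :
    ¬Tendsto f atTop (nhds 0) := fun hf ↦ by
  obtain ⟨n, hn, h1⟩ := ((hf.eventually (gt_mem_nhds hc)).and (eventually_ge_atTop 1)).exists
  linarith [h n h1]

theorem stmt_18_general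
    {H : Type*} [NormedAddCommGroup H] [InnerProductSpace ℂ H] [CompleteSpace H]
    (e : HilbertBasis ℕ ℂ H)
    (B2 Q2 : H →ₗ.[ℂ] H)
    (hedomB : ∀ k, (e k : H) ∈ B2.domain)
    (hedomQ : ∀ k, (e k : H) ∈ Q2.domain)
    (hB2 : ∀ n : ℕ, B2 ⟨e n, hedomB n⟩
      = ((Real.sqrt ((n + 1) * (n + 2)) : ℝ) : ℂ) • e (n + 2)
        + ((Real.sqrt (n * (n - 1)) : ℝ) : ℂ) • e (n - 2))
    (hQ2 : ∀ n : ℕ, Q2 ⟨e n, hedomQ n⟩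
      = ((1 / 2 : ℝ) : ℂ) •
          (((Real.sqrt ((n + 1) * (n + 2)) : ℝ) : ℂ) • e (n + 2)
            + ((Real.sqrt (n * (n - 1)) : ℝ) : ℂ) • e (n - 2)
            + ((2 * n + 1 : ℕ) : ℂ) • e n))
    (P : ℕ → H →L[ℂ] H)
    (hP : ∀ n x, P n x = ∑ i ∈ Finset.range n, ((inner ℂ (e i) x : ℂ) • e i))
    (hPmemB : ∀ n x, P n x ∈ B2.domain)
    (hPmemQ : ∀ n x, P n x ∈ Q2.domain)
    (C CQ : ℕ → H →L[ℂ] H)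
    (hC : ∀ n, ∀ ψ : B2.domain,
      C n ψ = B2 ⟨P n ψ, hPmemB n ψ⟩ - P n (B2 ψ))
    (hCQ : ∀ n, ∀ ψ : Q2.domain,
      CQ n ψ = Q2 ⟨P n ψ, hPmemQ n ψ⟩ - P n (Q2 ψ)) :
    (∀ n : ℕ, trNormOn e (CQ n) = (1 / 2) * trNormOn e (C n)) ∧
    (∀ n : ℕ, Real.sqrt (∑' k, ‖CQ n (e k)‖ ^ 2)
      = (1 / 2) * Real.sqrt (∑' k, ‖C n (e k)‖ ^ 2)) ∧
    (∀ n : ℕ, 1 ≤ n → trNormOn e (C n) / n ≥ 1) ∧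
    (∀ n : ℕ, 1 ≤ n →
      Real.sqrt (∑' k, ‖C n (e k)‖ ^ 2) / Real.sqrt n ≥ Real.sqrt n) ∧
    ¬ Filter.Tendsto (fun n : ℕ => trNormOn e (CQ n) / n)
      Filter.atTop (nhds 0) ∧
    ¬ Filter.Tendsto (fun n : ℕ =>
        Real.sqrt (∑' k, ‖CQ n (e k)‖ ^ 2) / Real.sqrt n)
      Filter.atTop (nhds 0) := by
  have hP' : ∀ n k, P n (e k) = if k < n then e k else 0 := fun n k ↦ by
    rw [hP, e.orthonormal.sum_range_inner_smul]
  have hC' : ∀ n, C n = (1 : ℝ) • cutCommutator e n := fun n ↦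
    commutator_ladder_add_diagonal e hedomB 1 0 (fun k ↦ by simpa using hB2 k) n (hP' n) (hC n)
  have hCQ' : ∀ n, CQ n = (1 / 2 : ℝ) • cutCommutator e n := fun n ↦
    commutator_ladder_add_diagonal e hedomQ _ _ hQ2 n (hP' n) (hCQ n)
  simp only [hC', hCQ', trNormOn_smul_cutCommutator e zero_le_one,
    trNormOn_smul_cutCommutator e one_half_pos.le, tsum_norm_sq_smul_cutCommutator]
  have hsqrt : ∀ S : ℝ, √(2 * (1 / 2) ^ 2 * S) = 1 / 2 * √(2 * 1 ^ 2 * S) := fun S ↦ by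
    rw [show 2 * (1 / 2) ^ 2 * S = (1 / 2) ^ 2 * (2 * 1 ^ 2 * S) by ring,
      Real.sqrt_mul (by positivity), Real.sqrt_sq (by norm_num)]
  refine ⟨fun n ↦ by ring, fun n ↦ hsqrt _, fun n hn ↦ ?_, fun n hn ↦ ?_,
    not_tendsto_nhds_zero_of_le one_pos fun n hn ↦ ?_,
    not_tendsto_nhds_zero_of_le one_half_pos fun n hn ↦ ?_⟩
  · have := one_le_sqrtPronic_add_div hn
    rw [mul_div_assoc]
    linarith
  · simpa using sqrt_le_sqrt_two_mul_sq_add_sq_div hn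
  · simpa using one_le_sqrtPronic_add_div hn
  · have h1 := sqrt_le_sqrt_two_mul_sq_add_sq_div hn
    have h2 : 1 ≤ √(n : ℝ) := Real.one_le_sqrt.mpr (by exact_mod_cast hn)
    rw [hsqrt, mul_div_assoc]
    simp only [one_pow, mul_one]
    linarith

/-- for `B₂ = (a*)² + a²` on the oscillator basis (domain `c₀₀`)
one has `‖[B₂, P_n]‖_{a,B}/‖P_n‖_a ≥ n^{1−1/a}` for `a ∈ {1,2}`; since
`a*a + aa*` is diagonal, `‖[Q², P_n]‖_{a,B} = (1/2)‖[B₂, P_n]‖_{a,B}`, so the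
canonical projections are neither a 1-Følner nor a 2-Følner sequence for the
squared position operator `Q²`. `C n` and `CQ n` denote the bounded extensions
of `[B₂, P_n]` and `[Q², P_n]`. -/
theorem stmt_18
    {H : Type*} [NormedAddCommGroup H] [InnerProductSpace ℂ H] [CompleteSpace H]
    (e : HilbertBasis ℕ ℂ H)
    (B2 Q2 : H →ₗ.[ℂ] H)
    (hdomB : B2.domain = Submodule.span ℂ (Set.range ⇑e))
    (hdomQ : Q2.domain = Submodule.span ℂ (Set.range ⇑e))
    (hedomB : ∀ k, (e k : H) ∈ B2.domain)
    (hedomQ : ∀ k, (e k : H) ∈ Q2.domain)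
    (hB2 : ∀ n : ℕ, B2 ⟨e n, hedomB n⟩
      = ((Real.sqrt ((n + 1) * (n + 2)) : ℝ) : ℂ) • e (n + 2)
        + ((Real.sqrt (n * (n - 1)) : ℝ) : ℂ) • e (n - 2))
    (hQ2 : ∀ n : ℕ, Q2 ⟨e n, hedomQ n⟩
      = ((1 / 2 : ℝ) : ℂ) •
          (((Real.sqrt ((n + 1) * (n + 2)) : ℝ) : ℂ) • e (n + 2)
            + ((Real.sqrt (n * (n - 1)) : ℝ) : ℂ) • e (n - 2)
            + ((2 * n + 1 : ℕ) : ℂ) • e n))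
    (P : ℕ → H →L[ℂ] H)
    (hP : ∀ n x, P n x = ∑ i ∈ Finset.range n, ((inner ℂ (e i) x : ℂ) • e i))
    (hPmemB : ∀ n x, P n x ∈ B2.domain)
    (hPmemQ : ∀ n x, P n x ∈ Q2.domain)
    (C CQ : ℕ → H →L[ℂ] H)
    (hC : ∀ n, ∀ ψ : B2.domain,
      C n ψ = B2 ⟨P n ψ, hPmemB n ψ⟩ - P n (B2 ψ))
    (hCQ : ∀ n, ∀ ψ : Q2.domain,
      CQ n ψ = Q2 ⟨P n ψ, hPmemQ n ψ⟩ - P n (Q2 ψ)) :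
    (∀ n : ℕ, trNormOn e (CQ n) = (1 / 2) * trNormOn e (C n)) ∧
    (∀ n : ℕ, Real.sqrt (∑' k, ‖CQ n (e k)‖ ^ 2)
      = (1 / 2) * Real.sqrt (∑' k, ‖C n (e k)‖ ^ 2)) ∧
    (∀ n : ℕ, 1 ≤ n → trNormOn e (C n) / n ≥ 1) ∧
    (∀ n : ℕ, 1 ≤ n →
      Real.sqrt (∑' k, ‖C n (e k)‖ ^ 2) / Real.sqrt n ≥ Real.sqrt n) ∧
    ¬ Filter.Tendsto (fun n : ℕ => trNormOn e (CQ n) / n)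
      Filter.atTop (nhds 0) ∧
    ¬ Filter.Tendsto (fun n : ℕ =>
        Real.sqrt (∑' k, ‖CQ n (e k)‖ ^ 2) / Real.sqrt n)
      Filter.atTop (nhds 0) :=
  stmt_18_general e B2 Q2 hedomB hedomQ hB2 hQ2 P hP hPmemB hPmemQ C CQ hC hCQ
end
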